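/- arXiv:1605.06615 — 6 statements merged into one kernel-verified Lean document; each statement's English description precedes it below -/
import Mathlib

section
/- Let r ≥ 2, h = ⌈log₂ r⌉, and let c be the completely balanced alphabetic code on r characters defined by: c(i) is the h-bit big-endian binary representation of i if i < 2r − 2^h, and otherwise the (h−1)-bit big-endian binary representation of i − r + 2^{h−1}. Then for every i < r and every h-bit string s having c(i) as a prefix, letting j be the value of s read as a big-endian binary number: if j < 2r − 2^h then i = j, and otherwise i = ⌊j/2⌋ + r − 2^{h−1}. -/
/-- `bitsBE h i` is the `h`-bit big-endian binary representation of `i`. -/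
def bitsBE : ℕ → ℕ → List Bool
  | 0, _ => []
  | h + 1, i => bitsBE h (i / 2) ++ [i % 2 == 1]

/-- The value of a bit string read as a big-endian binary number. -/
def valBE (l : List Bool) : ℕ :=
  l.foldl (fun a b => 2 * a + (if b then 1 else 0)) 0

/-- The completely balanced alphabetic code on `r` characters, deeper leaves
leftmost, where `h = ⌈log₂ r⌉`. -/
def balancedCode (r : ℕ) (i : Fin r) : List Bool :=
  if (i : ℕ) < 2 * r - 2 ^ Nat.clog 2 r then
    bitsBE (Nat.clog 2 r) i
  else
    bitsBE (Nat.clog 2 r - 1) ((i : ℕ) + 2 ^ (Nat.clog 2 r - 1) - r)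

/-!
A codeword of length `k` that extends to an `h`-bit string `s` consists of the leading `k` bits
of `s`, so its value is `valBE s / 2 ^ (h - k)`. For a long codeword (`k = h`) this is `valBE s`;
for a short one (`k = h - 1`) it is `valBE s / 2 = i + 2^(h-1) - r`. The first short leaf
`i = 2r - 2^h` has value `r - 2^(h-1)`, so the `h`-bit strings below short leaves are exactly
those with `valBE s ≥ 2r - 2^h`.
-/

theorem length_bitsBE (h i : ℕ) : (bitsBE h i).length = h := by
  induction h generalizing i with
  | zero => rfl
  | succ h ih => simp [bitsBE, ih]

theorem foldl_eq_two_pow_length_mul_add_valBE (a : ℕ) (l : List Bool) :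
    l.foldl (fun a b => 2 * a + (if b then 1 else 0)) a = 2 ^ l.length * a + valBE l := by
  induction l generalizing a with
  | nil => simp [valBE]
  | cons b l ih =>
    rw [valBE]
    simp only [List.foldl_cons]
    rw [ih, ih, List.length_cons, pow_succ]
    ring

theorem valBE_append (l t : List Bool) : valBE (l ++ t) = 2 ^ t.length * valBE l + valBE t := by
  rw [valBE, List.foldl_append, foldl_eq_two_pow_length_mul_add_valBE, ← valBE]

theorem valBE_lt_two_pow_length (l : List Bool) : valBE l < 2 ^ l.length := by
  induction l with
  | nil => simp [valBE]
  | cons b l ih =>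
    rw [← List.singleton_append, valBE_append, List.length_append, pow_add]
    have hb : valBE [b] ≤ 1 := by cases b <;> simp [valBE]
    simp only [List.length_singleton, pow_one]
    nlinarith

theorem valBE_bitsBE (h i : ℕ) (hi : i < 2 ^ h) : valBE (bitsBE h i) = i := by
  induction h generalizing i with
  | zero => simpa [bitsBE, valBE] using (Nat.lt_one_iff.mp hi).symm
  | succ h ih =>
    rw [bitsBE, valBE_append, ih _ (by omega)]
    rcases Nat.mod_two_eq_zero_or_one i with h0 | h0 <;> simp [h0, valBE] <;> omega

theorem valBE_div_of_bitsBE_isPrefix {k n : ℕ} {s : List Bool} (hn : n < 2 ^ k)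
    (hpre : bitsBE k n <+: s) : valBE s / 2 ^ (s.length - k) = n := by
  obtain ⟨t, rfl⟩ := hpre
  have ht : (bitsBE k n ++ t).length - k = t.length := by simp [length_bitsBE]
  rw [ht, valBE_append, valBE_bitsBE k n hn, Nat.mul_add_div (by positivity),
    Nat.div_eq_of_lt (valBE_lt_two_pow_length t), add_zero]

theorem balancedCode_decode_general (r : ℕ) (i : Fin r)
    (s : List Bool) (hs : s.length = Nat.clog 2 r)
    (hpre : balancedCode r i <+: s) :
    (valBE s < 2 * r - 2 ^ Nat.clog 2 r → (i : ℕ) = valBE s) ∧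
    (¬ valBE s < 2 * r - 2 ^ Nat.clog 2 r →
      (i : ℕ) = valBE s / 2 + r - 2 ^ (Nat.clog 2 r - 1)) := by
  unfold balancedCode at hpre
  set h := Nat.clog 2 r
  have hi := i.isLt
  have hle : r ≤ 2 ^ h := Nat.le_pow_clog (by norm_num) r
  split_ifs at hpre with hlong
  · have hval := valBE_div_of_bitsBE_isPrefix (by omega) hpre
    rw [hs, Nat.sub_self, pow_zero, Nat.div_one] at hval
    omega
  · have hr : 1 < r := by
      by_contra! hr
      have : h = 0 := Nat.clog_of_right_le_one hr 2
      simp only [this, pow_zero] at hlong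
      omega
    have hh : 0 < h := Nat.clog_pos (by norm_num) hr
    have hlt : 2 ^ (h - 1) < r := Nat.pow_pred_clog_lt_self (by norm_num) hr
    have hpow : 2 ^ h = 2 * 2 ^ (h - 1) := by rw [← pow_succ', Nat.sub_add_cancel hh]
    have hval := valBE_div_of_bitsBE_isPrefix (by omega) hpre
    rw [hs, Nat.sub_sub_self hh, pow_one] at hval
    omega

/-- Constant-time decoding in a completely balanced subtree: reading any
`h`-bit string `s` that extends the codeword of `i` as a big-endian number `j`,
we recover `i` as `j` if `j < 2r - 2^h` and as `⌊j/2⌋ + r - 2^(h-1)`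
otherwise. -/
theorem balancedCode_decode (r : ℕ) (hr : 2 ≤ r) (i : Fin r)
    (s : List Bool) (hs : s.length = Nat.clog 2 r)
    (hpre : balancedCode r i <+: s) :
    (valBE s < 2 * r - 2 ^ Nat.clog 2 r → (i : ℕ) = valBE s) ∧
    (¬ valBE s < 2 * r - 2 ^ Nat.clog 2 r →
      (i : ℕ) = valBE s / 2 + r - 2 ^ (Nat.clog 2 r - 1)) :=
  balancedCode_decode_general r i s hs hpre
end

section
/- Let c be an alphabetic prefix-free code on σ ≥ 1 characters and let D ≥ 0 be an integer. Then there exists an alphabetic prefix-free code c' on the same σ characters such that: (a) c'(i) = c(i) whenever |c(i)| ≤ D; (b) whenever |c(i)| > D, the codeword c'(i) has the same length-D prefix as c(i) and |c'(i)| ≤ max_j |c(j)|; and (c) for every i with |c(i)| > D, if k is the number of indices j such that c(j) shares the length-D prefix of c(i), then |c'(i)| equals D + ⌈log₂ k⌉ or D + ⌈log₂ k⌉ − 1, with exactly 2k − 2^{⌈log₂ k⌉} characters of that prefix class receiving the larger length. -/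
/-- Lexicographic strict order on bit strings: `0 < 1`, a proper prefix is
smaller than its extensions. -/
def lexLT (x y : List Bool) : Prop := List.Lex (· < ·) x y

/-- A set of bit strings is prefix-free if no element is a proper prefix of
another. -/
def PrefixFree (C : Set (List Bool)) : Prop :=
  ∀ u ∈ C, ∀ v ∈ C, u <+: v → u = v

/-- An alphabetic prefix-free code on `σ` characters. -/
def AlphabeticCode (σ : ℕ) (c : Fin σ → List Bool) : Prop :=
  PrefixFree (Set.range c) ∧ ∀ i j : Fin σ, i < j → lexLT (c i) (c j)

/-!
Inside a prefix class of `k` characters, those whose codewords share the length-`D` prefix `p`,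
the tails below `p` are replaced by the complete balanced alphabetic code on `k` leaves: with
`L = ⌈log₂ k⌉`, the first `2k - 2^L` characters get the depth-`L` words `0, 1, …` and the rest
get the following depth-`(L-1)` words, in the order of the characters.

A code is alphabetic and prefix-free exactly when, for `i < j`, the words `c i` and `c j`
branch apart with `c i` going left (`LeftOf`). This survives the surgery: words with different
length-`D` prefixes already branch apart above depth `D`, and within a class the balanced code
has the property itself. Since the tails in a class are prefix-free, `k ≤ 2^(max |c j| - D)`,
so no word gets longer than the longest original one.
-/

open Finset

inductive LeftOf : List Bool → List Bool → Prop
  | here (x y : List Bool) : LeftOf (false :: x) (true :: y)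
  | cons (b : Bool) {x y : List Bool} : LeftOf x y → LeftOf (b :: x) (b :: y)

namespace LeftOf

variable {x y : List Bool}

theorem lt (h : LeftOf x y) : x < y := by
  induction h with
  | here => exact List.Lex.rel Bool.false_lt_true
  | cons b _ ih => exact List.Lex.cons ih

theorem not_isPrefix (h : LeftOf x y) : ¬ x <+: y := by
  induction h with
  | here => simp [List.cons_prefix_cons]
  | cons b _ ih => simpa [List.cons_prefix_cons] using ih

theorem not_isPrefix_symm (h : LeftOf x y) : ¬ y <+: x :=
  fun hyx => hyx.le h.lt

theorem of_lt_of_not_isPrefix (h : x < y) (hxy : ¬ x <+: y) : LeftOf x y := by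
  induction h with
  | nil => exact absurd List.nil_prefix hxy
  | @rel a _ b _ hab =>
    cases a <;> cases b <;> first | exact here _ _ | exact absurd hab (by decide)
  | cons _ ih => exact cons _ (ih fun h => hxy (List.cons_prefix_cons.mpr ⟨rfl, h⟩))

theorem append_left (h : LeftOf x y) (p : List Bool) : LeftOf (p ++ x) (p ++ y) := by
  induction p with
  | nil => exact h
  | cons b p ih => exact cons b ih

theorem append_right (h : LeftOf x y) (z w : List Bool) : LeftOf (x ++ z) (y ++ w) := by
  induction h with
  | here => exact here _ _
  | cons b _ ih => exact cons b ih

theorem take (h : LeftOf x y) {n : ℕ} (hn : x.take n ≠ y.take n) :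
    LeftOf (x.take n) (y.take n) := by
  induction h generalizing n with
  | here => cases n <;> simp_all [here]
  | cons b _ ih => cases n <;> simp_all [cons]

end LeftOf

theorem eq_of_isPrefix_of_leftOf {ι : Type*} [LinearOrder ι] {c : ι → List Bool}
    (hc : ∀ i j, i < j → LeftOf (c i) (c j)) {i j : ι} (h : c i <+: c j) : i = j := by
  rcases lt_trichotomy i j with hij | rfl | hji
  · exact absurd h (hc i j hij).not_isPrefix
  · rfl
  · exact absurd h (hc j i hji).not_isPrefix_symm

theorem alphabeticCode_iff_leftOf {σ : ℕ} {c : Fin σ → List Bool} :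
    AlphabeticCode σ c ↔ ∀ i j, i < j → LeftOf (c i) (c j) := by
  refine ⟨fun ⟨hpf, hlex⟩ i j hij => .of_lt_of_not_isPrefix (hlex i j hij) fun h => ?_,
    fun hc => ⟨?_, fun i j hij => (hc i j hij).lt⟩⟩
  · have hlt := hlex i j hij
    rw [hpf _ ⟨i, rfl⟩ _ ⟨j, rfl⟩ h] at hlt
    exact List.lt_irrefl _ hlt
  · rintro _ ⟨i, rfl⟩ _ ⟨j, rfl⟩ h
    rw [eq_of_isPrefix_of_leftOf hc h]

def bitString : ℕ → ℕ → List Bool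
  | 0, _ => []
  | n + 1, v => bitString n (v / 2) ++ [decide (v % 2 = 1)]

@[simp] theorem length_bitString (n v : ℕ) : (bitString n v).length = n := by
  induction n generalizing v with
  | zero => rfl
  | succ n ih => simp [bitString, ih]

theorem leftOf_bitString {n a b : ℕ} (hab : a < b) (hb : b < 2 ^ n) :
    LeftOf (bitString n a) (bitString n b) := by
  induction n generalizing a b with
  | zero => omega
  | succ n ih =>
    rcases (Nat.div_le_div_right (c := 2) hab.le).lt_or_eq with hlt | heq
    · exact (ih hlt (by rw [pow_succ] at hb; omega)).append_right _ _
    · have ha : a % 2 = 0 := by omega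
      have hb : b % 2 = 1 := by omega
      simpa [bitString, heq, ha, hb] using (LeftOf.here [] []).append_left (bitString n (b / 2))

/-- The `2k - 2^L` words of length `L = ⌈log₂ k⌉` take up the first `k - 2^(L-1)` nodes of
depth `L - 1`; the remaining words are the next nodes of that depth. -/
def balancedWord (k m : ℕ) : List Bool :=
  if m < 2 * k - 2 ^ Nat.clog 2 k then bitString (Nat.clog 2 k) m
  else bitString (Nat.clog 2 k - 1) (m - (k - 2 ^ (Nat.clog 2 k - 1)))

theorem balancedWord_one (m : ℕ) : balancedWord 1 m = [] := by
  simp [balancedWord, bitString]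

theorem exists_clog_two_eq_succ {k m : ℕ} (hm : m < k) (h : 2 * k - 2 ^ Nat.clog 2 k ≤ m) :
    ∃ l, Nat.clog 2 k = l + 1 ∧ 2 ^ l < k := by
  have hk : 1 < k := by
    by_contra hk
    interval_cases k <;> simp_all
  exact ⟨Nat.clog 2 k - 1, (Nat.succ_pred_eq_of_pos (Nat.clog_pos one_lt_two hk)).symm,
    Nat.pow_pred_clog_lt_self one_lt_two hk⟩

theorem length_balancedWord {k m : ℕ} (hm : m < k) :
    (m < 2 * k - 2 ^ Nat.clog 2 k ∧ (balancedWord k m).length = Nat.clog 2 k) ∨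
      (2 * k - 2 ^ Nat.clog 2 k ≤ m ∧ (balancedWord k m).length + 1 = Nat.clog 2 k) := by
  unfold balancedWord
  split_ifs with h
  · exact .inl ⟨h, length_bitString _ _⟩
  · obtain ⟨l, hl, -⟩ := exists_clog_two_eq_succ hm (not_lt.mp h)
    exact .inr ⟨not_lt.mp h, by simp [hl]⟩

theorem leftOf_balancedWord {k m m' : ℕ} (h : m < m') (hm' : m' < k) :
    LeftOf (balancedWord k m) (balancedWord k m') := by
  have hk := Nat.le_pow_clog one_lt_two k
  unfold balancedWord
  split_ifs with h₁ h₂ h₂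
  · exact leftOf_bitString h (by omega)
  · obtain ⟨l, hl, hlk⟩ := exists_clog_two_eq_succ hm' (not_lt.mp h₂)
    rw [hl, pow_succ] at h₁ h₂ hk
    rw [hl, Nat.add_sub_cancel, bitString]
    simpa using (leftOf_bitString (n := l) (a := m / 2) (b := m' - (k - 2 ^ l))
      (by omega) (by omega)).append_right _ []
  · omega
  · obtain ⟨l, hl, hlk⟩ := exists_clog_two_eq_succ hm' (not_lt.mp h₂)
    rw [hl, pow_succ] at h₂ hk
    rw [hl, Nat.add_sub_cancel]
    exact leftOf_bitString (by omega) (by omega)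

namespace Finset

variable {α : Type*} [LinearOrder α] {s : Finset α} {a b : α}

def rank (s : Finset α) (a : α) : ℕ := #{x ∈ s | x < a}

theorem rank_lt_rank (ha : a ∈ s) (hab : a < b) : rank s a < rank s b :=
  card_lt_card <| (ssubset_iff_of_subset fun x hx => by
      simp only [mem_filter] at hx ⊢; exact ⟨hx.1, hx.2.trans hab⟩).mpr
    ⟨a, by simp [ha, hab]⟩

theorem rank_lt_card (ha : a ∈ s) : rank s a < #s :=
  card_lt_card <| (ssubset_iff_of_subset (filter_subset _ s)).mpr ⟨a, by simp [ha]⟩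

theorem rank_injOn (s : Finset α) : Set.InjOn (rank s) s :=
  StrictMonoOn.injOn fun _ ha _ _ hab => rank_lt_rank ha hab

theorem image_rank (s : Finset α) : s.image (rank s) = range #s :=
  eq_of_subset_of_card_le (fun _ hx => by
      obtain ⟨a, ha, rfl⟩ := mem_image.mp hx
      exact mem_range.mpr (rank_lt_card ha))
    (by rw [card_range, card_image_of_injOn (rank_injOn s)])

theorem card_filter_rank_lt {t : ℕ} (ht : t ≤ #s) : #{a ∈ s | rank s a < t} = t := by
  calc #{a ∈ s | rank s a < t}
      = #({a ∈ s | rank s a < t}.image (rank s)) :=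
        (card_image_of_injOn ((rank_injOn s).mono (filter_subset _ s))).symm
    _ = #{x ∈ range #s | x < t} := by rw [← image_rank s, filter_image]
    _ = t := by
        rw [show {x ∈ range #s | x < t} = range t by ext; simp; omega, card_range]

end Finset

theorem card_le_two_pow_of_isPrefix {ι : Type*} {s : Finset ι} {w : ι → List Bool} {N : ℕ}
    (hw : ∀ i ∈ s, ∀ j ∈ s, w i <+: w j → i = j) (hN : ∀ i ∈ s, (w i).length ≤ N) :
    #s ≤ 2 ^ N := by
  let pad : s → List.Vector Bool N := fun i =>
    ⟨w i ++ List.replicate (N - (w i).length) false, by simp; have := hN i i.2; omega⟩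
  have hpad : Function.Injective pad := by
    intro i j hij
    have hi : w i <+: (pad j).1 := hij ▸ List.prefix_append _ _
    rcases List.prefix_or_prefix_of_prefix hi (List.prefix_append _ _) with h | h
    · exact Subtype.ext (hw i i.2 j j.2 h)
    · exact Subtype.ext (hw j j.2 i i.2 h).symm
  simpa using Fintype.card_le_of_injective pad hpad

section Balance

variable {ι : Type*} [Fintype ι]

def prefixClass (D : ℕ) (c : ι → List Bool) (i : ι) : Finset ι :=
  Finset.univ.filter fun j => (c i).take D <+: c j

variable {D : ℕ} {c : ι → List Bool} {i j : ι}

theorem self_mem_prefixClass (D : ℕ) (c : ι → List Bool) (i : ι) :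
    i ∈ prefixClass D c i := by
  simp [prefixClass, List.take_prefix]

theorem take_eq_of_mem_prefixClass (hc : ∀ i j, c i <+: c j → i = j)
    (hj : j ∈ prefixClass D c i) : (c j).take D = (c i).take D := by
  have hp : (c i).take D <+: c j := (mem_filter.mp hj).2
  by_cases hi : D ≤ (c i).length
  · rw [List.prefix_iff_eq_take.mp hp, List.length_take, min_eq_left hi]
  · rw [List.take_of_length_le (by omega)] at hp
    rw [hc i j hp]

theorem prefixClass_eq_of_mem (hc : ∀ i j, c i <+: c j → i = j)
    (hj : j ∈ prefixClass D c i) : prefixClass D c j = prefixClass D c i := by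
  simp only [prefixClass, take_eq_of_mem_prefixClass hc hj]

theorem prefixClass_eq_singleton (hc : ∀ i j, c i <+: c j → i = j)
    (hi : (c i).length ≤ D) : prefixClass D c i = {i} := by
  ext j
  simp only [prefixClass, mem_filter, mem_univ, true_and, mem_singleton,
    List.take_of_length_le hi]
  exact ⟨fun h => (hc i j h).symm, by rintro rfl; exact List.prefix_refl _⟩

theorem card_prefixClass_le (hc : ∀ i j, c i <+: c j → i = j) :
    #(prefixClass D c i) ≤ 2 ^ (univ.sup (fun j => (c j).length) - D) := by
  refine card_le_two_pow_of_isPrefix (w := fun j => (c j).drop D)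
    (fun j hj j' hj' h => hc j j' ?_) (fun j _ => ?_)
  · rw [← List.take_append_drop D (c j), ← List.take_append_drop D (c j'),
      take_eq_of_mem_prefixClass hc hj, take_eq_of_mem_prefixClass hc hj']
    exact (List.prefix_append_right_inj _).mpr h
  · have := le_sup (f := fun j => (c j).length) (mem_univ j)
    simp only [List.length_drop]
    omega

variable [LinearOrder ι]

def balanceBelow (D : ℕ) (c : ι → List Bool) (i : ι) : List Bool :=
  (c i).take D ++ balancedWord #(prefixClass D c i) (rank (prefixClass D c i) i)

theorem balanceBelow_of_length_le (hc : ∀ i j, c i <+: c j → i = j)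
    (hi : (c i).length ≤ D) : balanceBelow D c i = c i := by
  simp [balanceBelow, prefixClass_eq_singleton hc hi, balancedWord_one,
    List.take_of_length_le hi]

theorem take_balanceBelow (hi : D ≤ (c i).length) :
    (balanceBelow D c i).take D = (c i).take D := by
  simp [balanceBelow, hi]

theorem length_balanceBelow_of_mem (hc : ∀ i j, c i <+: c j → i = j)
    (hi : D ≤ (c i).length) (hj : j ∈ prefixClass D c i) :
    (balanceBelow D c j).length =
      D + (balancedWord #(prefixClass D c i) (rank (prefixClass D c i) j)).length := by
  rw [balanceBelow, prefixClass_eq_of_mem hc hj, List.length_append,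
    take_eq_of_mem_prefixClass hc hj, List.length_take, min_eq_left hi]

theorem length_balanceBelow_le_sup (hc : ∀ i j, c i <+: c j → i = j)
    (hi : D ≤ (c i).length) :
    (balanceBelow D c i).length ≤ univ.sup (fun j => (c j).length) := by
  have hlen := length_balanceBelow_of_mem hc hi (self_mem_prefixClass D c i)
  have hclog := (Nat.clog_le_iff_le_pow one_lt_two).mpr (card_prefixClass_le (D := D) (i := i) hc)
  have hsup := le_sup (f := fun j => (c j).length) (mem_univ i)
  rcases length_balancedWord (rank_lt_card (self_mem_prefixClass D c i))
    with h | h <;> omega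

theorem card_filter_length_balanceBelow (hc : ∀ i j, c i <+: c j → i = j)
    (hi : D ≤ (c i).length) :
    #{j ∈ prefixClass D c i |
        (balanceBelow D c j).length = D + Nat.clog 2 #(prefixClass D c i)} =
      2 * #(prefixClass D c i) - 2 ^ Nat.clog 2 #(prefixClass D c i) := by
  have hk := Nat.le_pow_clog one_lt_two #(prefixClass D c i)
  rw [← card_filter_rank_lt (s := prefixClass D c i)
    (t := 2 * #(prefixClass D c i) - 2 ^ Nat.clog 2 #(prefixClass D c i)) (by omega)]
  refine congrArg card (filter_congr fun j hj => ?_)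
  rw [length_balanceBelow_of_mem hc hi hj]
  rcases length_balancedWord (rank_lt_card hj) with h | h <;> omega

theorem leftOf_balanceBelow (hc : ∀ i j, i < j → LeftOf (c i) (c j)) (hij : i < j) :
    LeftOf (balanceBelow D c i) (balanceBelow D c j) := by
  by_cases hD : (c i).take D = (c j).take D
  · have hj : j ∈ prefixClass D c i := by
      simpa [prefixClass, hD] using List.take_prefix D (c j)
    rw [balanceBelow, balanceBelow,
      prefixClass_eq_of_mem (fun _ _ => eq_of_isPrefix_of_leftOf hc) hj, hD]
    exact (leftOf_balancedWord (rank_lt_rank (self_mem_prefixClass D c i) hij)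
      (rank_lt_card hj)).append_left _
  · exact ((hc i j hij).take hD).append_right _ _

end Balance

theorem alphabetic_balance_at_depth_general (σ : ℕ)
    (c : Fin σ → List Bool) (hc : AlphabeticCode σ c) (D : ℕ) :
    ∃ c' : Fin σ → List Bool, AlphabeticCode σ c' ∧
      (∀ i, (c i).length ≤ D → c' i = c i) ∧
      (∀ i, D < (c i).length →
        (c' i).take D = (c i).take D ∧
        (c' i).length ≤ Finset.univ.sup (fun j => (c j).length)) ∧
      (∀ i, D < (c i).length →
        ∀ k : ℕ,
          k = (Finset.univ.filter fun j => (c i).take D <+: c j).card →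
          ((c' i).length = D + Nat.clog 2 k ∨
            (c' i).length + 1 = D + Nat.clog 2 k) ∧
          (Finset.univ.filter fun j =>
              ((c i).take D <+: c j) ∧
              (c' j).length = D + Nat.clog 2 k).card
            = 2 * k - 2 ^ Nat.clog 2 k) := by
  have hleft := alphabeticCode_iff_leftOf.mp hc
  have hpf : ∀ i j, c i <+: c j → i = j := fun _ _ => eq_of_isPrefix_of_leftOf hleft
  refine ⟨balanceBelow D c, alphabeticCode_iff_leftOf.mpr fun i j => leftOf_balanceBelow hleft,
    fun i hi => balanceBelow_of_length_le hpf hi,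
    fun i hi => ⟨take_balanceBelow hi.le, length_balanceBelow_le_sup hpf hi.le⟩,
    fun i hi k hk => ?_⟩
  change k = #(prefixClass D c i) at hk
  subst hk
  refine ⟨?_, by rw [← filter_filter]; exact card_filter_length_balanceBelow hpf hi.le⟩
  rw [length_balanceBelow_of_mem hpf hi.le (self_mem_prefixClass D c i)]
  rcases length_balancedWord (rank_lt_card (self_mem_prefixClass D c i))
    with h | h <;> omega

/-- Completely balancing every subtree of the code tree rooted at depth `D`:
codewords of length at most `D` are unchanged; longer codewords keep their
length-`D` prefix, do not exceed the original maximum length, and within each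
length-`D` prefix class of `k` characters the new lengths are
`D + ⌈log₂ k⌉` or `D + ⌈log₂ k⌉ - 1`, with exactly `2k - 2^⌈log₂ k⌉`
characters of the class receiving the larger length. -/
theorem alphabetic_balance_at_depth (σ : ℕ) (hσ : 1 ≤ σ)
    (c : Fin σ → List Bool) (hc : AlphabeticCode σ c) (D : ℕ) :
    ∃ c' : Fin σ → List Bool, AlphabeticCode σ c' ∧
      (∀ i, (c i).length ≤ D → c' i = c i) ∧
      (∀ i, D < (c i).length →
        (c' i).take D = (c i).take D ∧
        (c' i).length ≤ Finset.univ.sup (fun j => (c j).length)) ∧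
      (∀ i, D < (c i).length →
        ∀ k : ℕ,
          k = (Finset.univ.filter fun j => (c i).take D <+: c j).card →
          ((c' i).length = D + Nat.clog 2 k ∨
            (c' i).length + 1 = D + Nat.clog 2 k) ∧
          (Finset.univ.filter fun j =>
              ((c i).take D <+: c j) ∧
              (c' j).length = D + Nat.clog 2 k).card
            = 2 * k - 2 ^ Nat.clog 2 k) :=
  alphabetic_balance_at_depth_general σ c hc D
end

section
/- For every σ ≥ 4 and every probability distribution p on {0,…,σ−1} (p(i) ≥ 0, Σ_i p(i) = 1), there exists an alphabetic prefix-free code c on σ characters such that max_i |c(i)| ≤ log₂ σ + √(log₂ σ) + 3 and Σ_i p(i)·|c(i)| ≤ (1 + 1/⌈√(log₂ σ)⌉) · ((log₂ σ + √(log₂ σ) + 3) / ⌈log₂ σ − √(log₂ σ)⌉) · OPT, where OPT is the minimum of Σ_i p(i)·|c*(i)| over all alphabetic prefix-free codes c* on σ characters. Moreover c can be chosen so that each set of codewords sharing a common prefix of length ⌈log₂ σ − √(log₂ σ)⌉ has lengths differing by at most 1 (completely balanced subtrees). -/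
/-!
Recode an arbitrary alphabetic code `c*` at depth `k ≈ √(log₂ σ)`. Codewords shorter than `k`
are kept. Within each block of codewords sharing a prefix of length `k`, a codeword of length
`d` gets length `d + 2`, unless `d + 2` exceeds the balance depth `D = ⌈log₂ σ - √(log₂ σ)⌉`, in
which case it is moved to depth `⌈log₂ σ⌉ + k + 2`. Each block then has Kraft sum at most
`1/4 + 1/4`, so by Gilbert–Moore the new lengths are realised by an alphabetic code, in which all
codewords deeper than `D` have the same length. The ratio between new and old lengths is at most
the claimed factor (for `log₂ σ ≤ 4` a fixed-length code is used instead), so an alphabetic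
code that minimises the expected length among the finitely many balanced codes of the given
height is within that factor of every alphabetic code.
-/

namespace List

section PrefixOrder

variable {α : Type*}

def PrefixIncomp (u v : List α) : Prop := ¬ u <+: v ∧ ¬ v <+: u

theorem PrefixIncomp.of_cons {a : α} {u v : List α} (h : PrefixIncomp (a :: u) (a :: v)) :
    PrefixIncomp u v :=
  ⟨fun hp => h.1 (cons_prefix_cons.2 ⟨rfl, hp⟩),
    fun hp => h.2 (cons_prefix_cons.2 ⟨rfl, hp⟩)⟩

theorem prefixIncomp_of_length_eq {u v : List α} (hl : u.length = v.length) (hne : u ≠ v) :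
    PrefixIncomp u v :=
  ⟨fun hp => hne (hp.eq_of_length hl), fun hp => hne (hp.eq_of_length hl.symm).symm⟩

theorem PrefixIncomp.append {u v : List α} (h : PrefixIncomp u v) (x y : List α) :
    PrefixIncomp (u ++ x) (v ++ y) := by
  induction u generalizing v with
  | nil => exact absurd nil_prefix h.1
  | cons a u ih =>
    match v, h with
    | [], h => exact absurd nil_prefix h.2
    | b :: v, h =>
      by_cases hab : a = b
      · subst hab
        have := ih h.of_cons
        exact ⟨fun hp => this.1 (cons_prefix_cons.1 hp).2,
          fun hp => this.2 (cons_prefix_cons.1 hp).2⟩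
      · exact ⟨fun hp => hab (cons_prefix_cons.1 hp).1,
          fun hp => hab (cons_prefix_cons.1 hp).1.symm⟩

/-- Lexicographic comparison of two prefix-incomparable words is decided before either ends. -/
theorem lex_append_iff_of_prefixIncomp {r : α → α → Prop} {u v : List α} (h : PrefixIncomp u v)
    (x y : List α) : Lex r (u ++ x) (v ++ y) ↔ Lex r u v := by
  induction u generalizing v with
  | nil => exact absurd nil_prefix h.1
  | cons a u ih =>
    match v, h with
    | [], h => exact absurd nil_prefix h.2
    | b :: v, h =>
      simp only [cons_append, cons_lex_cons_iff]
      by_cases hab : a = b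
      · subst hab
        rw [ih h.of_cons]
      · simp [hab]

end PrefixOrder

end List

theorem ne_of_lexLT {u v : List Bool} (h : lexLT u v) : u ≠ v :=
  fun he => List.lt_irrefl _ (he ▸ h)

/-- The `k`-bit big-endian binary representation of `n`, i.e. of `n % 2 ^ k`. -/
def binWord : ℕ → ℕ → List Bool
  | 0, _ => []
  | k + 1, n => binWord k (n / 2) ++ [decide (n % 2 = 1)]

@[simp] theorem length_binWord (k n : ℕ) : (binWord k n).length = k := by
  induction k generalizing n with
  | zero => rfl
  | succ k ih => simp [binWord, ih]

theorem take_binWord {j k : ℕ} (n : ℕ) (h : j ≤ k) :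
    (binWord k n).take j = binWord j (n / 2 ^ (k - j)) := by
  induction k generalizing n with
  | zero => rw [Nat.le_zero.1 h]; rfl
  | succ k ih =>
    rcases Nat.lt_or_eq_of_le h with h | rfl
    · rw [binWord, List.take_append_of_le_length (by simp; omega), ih _ (by omega),
        Nat.div_div_eq_div_mul, ← pow_succ', Nat.sub_add_comm (by omega)]
    · simp [List.take_of_length_le]

theorem binWord_lt_binWord {k n m : ℕ} (hm : m < 2 ^ k) (hnm : n < m) :
    lexLT (binWord k n) (binWord k m) := by
  induction k generalizing n m with
  | zero => simp at hm; omega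
  | succ k ih =>
    have hdiv : n / 2 ≤ m / 2 := Nat.div_le_div_right hnm.le
    rcases hdiv.lt_or_eq with hlt | heq
    · have hm' : m / 2 < 2 ^ k := by rw [pow_succ] at hm; omega
      have hlex := ih hm' hlt
      exact (List.lex_append_iff_of_prefixIncomp
        (List.prefixIncomp_of_length_eq (by simp) (ne_of_lexLT hlex)) _ _).2 hlex
    · have hn : n % 2 = 0 := by omega
      have hm2 : m % 2 = 1 := by omega
      simp only [binWord, heq, hn, hm2]
      exact List.Lex.append_left _ (List.Lex.rel (by decide)) _

theorem binWord_injective {k n m : ℕ} (hn : n < 2 ^ k) (hm : m < 2 ^ k)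
    (h : binWord k n = binWord k m) : n = m := by
  by_contra hne
  rcases Nat.lt_or_gt_of_ne hne with hlt | hlt
  · exact ne_of_lexLT (binWord_lt_binWord hm hlt) h
  · exact ne_of_lexLT (binWord_lt_binWord hn hlt) h.symm

theorem binWord_prefix_iff {j k i n : ℕ} (hi : i < 2 ^ j) (hn : n < 2 ^ k) (hjk : j ≤ k) :
    binWord j i <+: binWord k n ↔ i = n / 2 ^ (k - j) := by
  have hq : n / 2 ^ (k - j) < 2 ^ j := by
    rw [Nat.div_lt_iff_lt_mul (by positivity), ← pow_add, Nat.add_sub_cancel' hjk]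
    exact hn
  rw [List.prefix_iff_eq_take, length_binWord, take_binWord _ hjk]
  exact ⟨binWord_injective hi hq, fun h => h ▸ rfl⟩

theorem mul_two_pow_sub_lt_two_pow {a e M : ℕ} (ha : a < 2 ^ e) (he : e ≤ M) :
    a * 2 ^ (M - e) < 2 ^ M := by
  calc a * 2 ^ (M - e) < 2 ^ e * 2 ^ (M - e) := by gcongr
    _ = 2 ^ M := by rw [← pow_add, Nat.add_sub_cancel' he]

theorem binWord_prefix_iff_mem_Ico {e M a x : ℕ} (ha : a < 2 ^ e) (hx : x < 2 ^ M) (he : e ≤ M) :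
    binWord e a <+: binWord M x ↔ x ∈ Set.Ico (a * 2 ^ (M - e)) ((a + 1) * 2 ^ (M - e)) := by
  rw [binWord_prefix_iff ha hx he, eq_comm, Nat.div_eq_iff (by positivity), add_one_mul,
    Set.mem_Ico]
  have : 0 < 2 ^ (M - e) := by positivity
  omega

theorem binWord_prefixIncomp_and_lt_of_le {e f M a b : ℕ} (he : e ≤ M) (hf : f ≤ M)
    (ha : a < 2 ^ e) (hb : b < 2 ^ f) (hab : (a + 1) * 2 ^ (M - e) ≤ b * 2 ^ (M - f)) :
    List.PrefixIncomp (binWord e a) (binWord f b) ∧ lexLT (binWord e a) (binWord f b) := by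
  have hx := mul_two_pow_sub_lt_two_pow ha he
  have hy := mul_two_pow_sub_lt_two_pow hb hf
  have hstep : a * 2 ^ (M - e) < (a + 1) * 2 ^ (M - e) := by gcongr; omega
  have hax : binWord e a <+: binWord M (a * 2 ^ (M - e)) :=
    (binWord_prefix_iff_mem_Ico ha hx he).2 ⟨le_rfl, hstep⟩
  have hby : binWord f b <+: binWord M (b * 2 ^ (M - f)) :=
    (binWord_prefix_iff_mem_Ico hb hy hf).2 ⟨le_rfl, by gcongr; omega⟩
  have hincomp : List.PrefixIncomp (binWord e a) (binWord f b) := by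
    constructor
    · intro hp
      exact absurd hab (not_le.2 ((binWord_prefix_iff_mem_Ico ha hy he).1 (hp.trans hby)).2)
    · intro hp
      have := (Set.mem_Ico.1 ((binWord_prefix_iff_mem_Ico hb hx hf).1 (hp.trans hax))).1
      omega
  refine ⟨hincomp, ?_⟩
  obtain ⟨r, hr⟩ := hax
  obtain ⟨r', hr'⟩ := hby
  have hlt := binWord_lt_binWord hy (hstep.trans_le hab)
  rw [← hr, ← hr'] at hlt
  exact (List.lex_append_iff_of_prefixIncomp hincomp _ _).1 hlt

theorem PrefixFree.uniquelyDecodable {S : Set (List Bool)} (h : PrefixFree S) (hnil : [] ∉ S) :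
    InformationTheory.UniquelyDecodable S := by
  intro L₁
  induction L₁ with
  | nil =>
    rintro (_ | ⟨w, L₂⟩) - h₂ heq
    · rfl
    · have hw : w = [] := (List.append_eq_nil_iff.1 heq.symm).1
      exact absurd (hw ▸ h₂ w List.mem_cons_self) hnil
  | cons w₁ L₁ ih =>
    rintro (_ | ⟨w₂, L₂⟩) h₁ h₂ heq
    · have hw : w₁ = [] := (List.append_eq_nil_iff.1 heq).1
      exact absurd (hw ▸ h₁ w₁ List.mem_cons_self) hnil
    · simp only [List.flatten_cons] at heq
      have hw₁ := h₁ w₁ List.mem_cons_self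
      have hw₂ := h₂ w₂ List.mem_cons_self
      have hpre₁ : w₁ <+: w₂ ++ L₂.flatten := heq ▸ List.prefix_append _ _
      have hpre₂ := List.prefix_append w₂ L₂.flatten
      have hw : w₁ = w₂ := by
        rcases le_total w₁.length w₂.length with hl | hl
        · exact h w₁ hw₁ w₂ hw₂ (List.prefix_of_prefix_length_le hpre₁ hpre₂ hl)
        · exact (h w₂ hw₂ w₁ hw₁ (List.prefix_of_prefix_length_le hpre₂ hpre₁ hl)).symm
      subst hw
      rw [ih L₂ (fun w hw => h₁ w (List.mem_cons_of_mem _ hw))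
        (fun w hw => h₂ w (List.mem_cons_of_mem _ hw)) (List.append_cancel_left heq)]

/-- Kraft's inequality, for a family of words none of which is a prefix of another one. -/
theorem sum_half_pow_length_le_one {ι : Type*} (G : Finset ι) (f : ι → List Bool)
    (hf : ∀ i ∈ G, ∀ j ∈ G, f i <+: f j → i = j) :
    ∑ i ∈ G, (1 / 2 : ℝ) ^ (f i).length ≤ 1 := by
  classical
  have hinj : Set.InjOn f G := fun i hi j hj he => hf i hi j hj (he ▸ List.prefix_rfl)
  rw [← Finset.sum_image (f := fun w : List Bool => (1 / 2 : ℝ) ^ w.length) hinj]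
  have hS : PrefixFree (G.image f : Set (List Bool)) := by
    simp only [PrefixFree, Finset.coe_image, Set.mem_image, Finset.mem_coe]
    rintro _ ⟨i, hi, rfl⟩ _ ⟨j, hj, rfl⟩ hp
    rw [hf i hi j hj hp]
  by_cases hnil : [] ∈ G.image f
  · have : G.image f = {[]} := Finset.eq_singleton_iff_unique_mem.2
      ⟨hnil, fun w hw => (hS [] hnil w hw List.nil_prefix).symm⟩
    simp [this]
  · simpa using InformationTheory.kraft_mcmillan_inequality (hS.uniquelyDecodable hnil)

theorem two_pow_succ_mul_half_pow {e M : ℕ} (he : e ≤ M) :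
    (2 : ℝ) ^ (M + 1) * (1 / 2) ^ e = ((2 * 2 ^ (M - e) : ℕ) : ℝ) := by
  have : (2 : ℝ) ^ (M + 1) = 2 * 2 ^ (M - e) * 2 ^ e := by
    rw [mul_assoc, ← pow_add, Nat.sub_add_cancel he, pow_succ']
  rw [this, mul_assoc, ← mul_pow]
  norm_num

/-- The Gilbert–Moore construction. -/
theorem exists_lex_ordered_words {ι : Type*} [LinearOrder ι] (G : Finset ι) (e : ι → ℕ)
    (hG : ∑ i ∈ G, (1 / 2 : ℝ) ^ e i ≤ 1 / 2) :
    ∃ w : ι → List Bool, (∀ i, (w i).length = e i) ∧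
      ∀ i ∈ G, ∀ j ∈ G, i < j → List.PrefixIncomp (w i) (w j) ∧ lexLT (w i) (w j) := by
  classical
  set M := G.sup e
  have heM : ∀ i ∈ G, e i ≤ M := fun i hi => Finset.le_sup hi
  set g : ι → ℕ := fun i => 2 ^ (M - e i)
  have hg : ∀ i, 0 < g i := fun i => by positivity
  have hgM : ∀ i ∈ G, 2 ^ e i * g i = 2 ^ M := fun i hi => by
    rw [← pow_add, Nat.add_sub_cancel' (heM i hi)]
  -- word `i` is the first aligned dyadic interval of length `g i` above `A i`; it lies in the
  -- slot `[A i, A i + 2 g i]`, and the slots of the words are consecutive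
  set A : ι → ℕ := fun i => ∑ j ∈ G.filter (· < i), 2 * g j
  have hkraft : ∑ i ∈ G, 2 * g i ≤ 2 ^ M := by
    have : ((∑ i ∈ G, 2 * g i : ℕ) : ℝ) ≤ (2 : ℝ) ^ (M + 1) * (1 / 2) := by
      rw [Nat.cast_sum, ← Finset.sum_congr rfl fun i hi => two_pow_succ_mul_half_pow (heM i hi),
        ← Finset.mul_sum]
      gcongr
    exact_mod_cast (this.trans_eq (by push_cast; ring) : _ ≤ ((2 ^ M : ℕ) : ℝ))
  have hA_insert : ∀ i, A i + 2 * g i = ∑ j ∈ insert i (G.filter (· < i)), 2 * g j := fun i => by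
    rw [Finset.sum_insert (by simp), add_comm]
  have hA_le_two_pow : ∀ i ∈ G, A i + 2 * g i ≤ 2 ^ M := fun i hi =>
    (hA_insert i).trans_le <| (Finset.sum_le_sum_of_subset
      (Finset.insert_subset hi (Finset.filter_subset _ _))).trans hkraft
  have hA_le_A : ∀ i ∈ G, ∀ j, i < j → A i + 2 * g i ≤ A j := fun i hi j hij =>
    (hA_insert i).trans_le <| Finset.sum_le_sum_of_subset <| Finset.insert_subset
      (Finset.mem_filter.2 ⟨hi, hij⟩) fun k hk =>
        Finset.mem_filter.2 ⟨(Finset.mem_filter.1 hk).1, (Finset.mem_filter.1 hk).2.trans hij⟩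
  set n : ι → ℕ := fun i => A i / g i + 1
  have hn_lo : ∀ i, A i < n i * g i := fun i => by
    simpa [n, add_one_mul] using Nat.lt_div_mul_add (a := A i) (hg i)
  have hn_hi : ∀ i, n i * g i ≤ A i + g i := fun i => by
    simpa [n, add_one_mul] using Nat.div_mul_le_self (A i) (g i)
  have hn_lt : ∀ i ∈ G, n i < 2 ^ e i := fun i hi => by
    refine Nat.lt_of_mul_lt_mul_right (a := g i) ?_
    rw [hgM i hi]
    linarith [hn_hi i, hA_le_two_pow i hi, hg i]
  refine ⟨fun i => binWord (e i) (n i), fun i => length_binWord _ _, fun i hi j hj hij => ?_⟩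
  refine binWord_prefixIncomp_and_lt_of_le (heM i hi) (heM j hj) (hn_lt i hi) (hn_lt j hj) ?_
  show (n i + 1) * g i ≤ n j * g j
  linarith [add_one_mul (n i) (g i), hn_hi i, hA_le_A i hi j hij, hn_lo j]

def BalancedAt {ι : Type*} (D : ℕ) (c : ι → List Bool) : Prop :=
  ∀ i j, D ≤ (c i).length → D ≤ (c j).length → (c i).take D = (c j).take D →
    (c i).length ≤ (c j).length + 1

theorem balancedAt_of_length_gt {ι : Type*} {c : ι → List Bool} (hc : PrefixFree (Set.range c))
    {D m : ℕ} (h : ∀ i, D < (c i).length → (c i).length = m) : BalancedAt D c := by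
  have hshort : ∀ i j, (c i).length = D → (c i).take D = (c j).take D → c i = c j :=
    fun i j hi ht => hc _ ⟨i, rfl⟩ _ ⟨j, rfl⟩ <| by
      rw [← List.take_of_length_le hi.le, ht]
      exact List.take_prefix _ _
  intro i j hi hj ht
  rcases hi.lt_or_eq with hi | hi
  · rcases hj.lt_or_eq with hj | hj
    · rw [h i hi, h j hj]
      omega
    · rw [hshort j i hj.symm ht.symm]
      omega
  · rw [hshort i j hi.symm ht]
    omega

def recodedLength (k D L d : ℕ) : ℕ :=
  if d < k then d else if d + 2 ≤ D then d + 2 else L + k + 2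

section recodedLength

variable {k D L : ℕ}

theorem recodedLength_le_max (hkD : k ≤ D) (d : ℕ) :
    recodedLength k D L d ≤ max D (L + k + 2) := by
  unfold recodedLength
  split_ifs <;> omega

theorem recodedLength_eq_of_lt (hkD : k ≤ D) {d : ℕ} (h : D < recodedLength k D L d) :
    recodedLength k D L d = L + k + 2 := by
  unfold recodedLength at *
  split_ifs at * <;> omega

theorem recodedLength_le_mul {F : ℝ} (hF : 1 ≤ F) (h₁ : (k : ℝ) + 2 ≤ F * k)
    (h₂ : (L : ℝ) + k + 2 ≤ F * (D - 1)) (d : ℕ) : (recodedLength k D L d : ℝ) ≤ F * d := by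
  unfold recodedLength
  split_ifs with hdk hdD
  · exact le_mul_of_one_le_left (Nat.cast_nonneg d) hF
  · have : (k : ℝ) ≤ d := by exact_mod_cast not_lt.1 hdk
    push_cast
    nlinarith
  · have : (D : ℝ) ≤ d + 1 := by exact_mod_cast (by omega : D ≤ d + 1)
    push_cast
    nlinarith

end recodedLength

namespace AlphabeticCode

variable {σ : ℕ} {c : Fin σ → List Bool}

theorem of_pairwise
    (h : ∀ i j, i < j → List.PrefixIncomp (c i) (c j) ∧ lexLT (c i) (c j)) :
    AlphabeticCode σ c := by
  refine ⟨?_, fun i j hij => (h i j hij).2⟩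
  rintro _ ⟨i, rfl⟩ _ ⟨j, rfl⟩ hp
  rcases lt_trichotomy i j with hij | rfl | hij
  · exact absurd hp (h i j hij).1.1
  · rfl
  · exact absurd hp (h j i hij).1.2

theorem eq_of_prefix (hc : AlphabeticCode σ c) {i j : Fin σ} (h : c i <+: c j) : i = j := by
  have he : c i = c j := hc.1 _ ⟨i, rfl⟩ _ ⟨j, rfl⟩ h
  by_contra hij
  rcases lt_or_gt_of_ne hij with hlt | hlt
  · exact ne_of_lexLT (hc.2 i j hlt) he
  · exact ne_of_lexLT (hc.2 j i hlt) he.symm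

theorem one_le_length (hc : AlphabeticCode σ c) (hσ : 2 ≤ σ) (i : Fin σ) :
    1 ≤ (c i).length := by
  have : Nontrivial (Fin σ) := Fin.nontrivial_iff_two_le.2 hσ
  obtain ⟨j, hj⟩ := exists_ne i
  by_contra! h
  rw [Nat.lt_one_iff, List.length_eq_zero_iff] at h
  exact hj (hc.eq_of_prefix (h ▸ List.nil_prefix)).symm

theorem le_length_of_take_eq (hc : AlphabeticCode σ c) {i j : Fin σ} (hij : i ≠ j) {k : ℕ}
    (h : (c i).take k = (c j).take k) : k ≤ (c i).length := by
  by_contra! hlt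
  refine hij (hc.eq_of_prefix ?_)
  rw [← List.take_of_length_le hlt.le, h]
  exact List.take_prefix _ _

theorem prefixIncomp_take (hc : AlphabeticCode σ c) {i j : Fin σ} (hij : i ≠ j) {k : ℕ}
    (h : (c i).take k ≠ (c j).take k) : List.PrefixIncomp ((c i).take k) ((c j).take k) := by
  suffices key : ∀ i j, i ≠ j → (c i).take k ≠ (c j).take k → ¬ (c i).take k <+: (c j).take k from
    ⟨key i j hij h, key j i hij.symm (Ne.symm h)⟩
  intro i j hij h hp
  have hlt : ((c i).take k).length < ((c j).take k).length :=
    lt_of_le_of_ne hp.length_le fun hl => h (hp.eq_of_length hl)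
  have hshort : (c i).length ≤ k := by
    simp only [List.length_take] at hlt
    omega
  rw [List.take_of_length_le hshort] at hp
  exact hij (hc.eq_of_prefix (hp.trans (List.take_prefix _ _)))

/-- Codewords shorter than `k` are left unchanged, since then `(c i).take k = c i`. -/
theorem replace_suffixes (hc : AlphabeticCode σ c) (k : ℕ) (w : Fin σ → List Bool)
    (hw : ∀ i j, i < j → k ≤ (c i).length → k ≤ (c j).length → (c i).take k = (c j).take k →
      List.PrefixIncomp (w i) (w j) ∧ lexLT (w i) (w j)) :
    AlphabeticCode σ (fun i => (c i).take k ++ if k ≤ (c i).length then w i else []) := by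
  refine of_pairwise fun i j hij => ?_
  by_cases hblock : (c i).take k = (c j).take k
  · have hi := hc.le_length_of_take_eq hij.ne hblock
    have hj := hc.le_length_of_take_eq hij.ne.symm hblock.symm
    obtain ⟨hincomp, hlex⟩ := hw i j hij hi hj hblock
    simp only [if_pos hi, if_pos hj, hblock]
    exact ⟨⟨fun hp => hincomp.1 ((List.prefix_append_right_inj _).1 hp),
      fun hp => hincomp.2 ((List.prefix_append_right_inj _).1 hp)⟩, hlex.append_left _ _⟩
  · have hincomp := hc.prefixIncomp_take hij.ne hblock
    have hlex : lexLT (c i) (c j) := hc.2 i j hij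
    rw [← List.take_append_drop k (c i), ← List.take_append_drop k (c j)] at hlex
    exact ⟨hincomp.append _ _, (List.lex_append_iff_of_prefixIncomp hincomp _ _).2
      ((List.lex_append_iff_of_prefixIncomp hincomp _ _).1 hlex)⟩

theorem sum_half_pow_length_drop_le_one (hc : AlphabeticCode σ c) (k : ℕ) (ρ : List Bool)
    (G : Finset (Fin σ)) (hG : ∀ i ∈ G, (c i).take k = ρ) :
    ∑ i ∈ G, (1 / 2 : ℝ) ^ ((c i).drop k).length ≤ 1 :=
  sum_half_pow_length_le_one G _ fun i hi j hj hp => hc.eq_of_prefix <| by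
    rw [← List.take_append_drop k (c i), ← List.take_append_drop k (c j), hG i hi, hG j hj]
    exact (List.prefix_append_right_inj ρ).2 hp

theorem exists_recoded (hc : AlphabeticCode σ c) (k D : ℕ) {L : ℕ} (hσL : σ ≤ 2 ^ L) :
    ∃ c' : Fin σ → List Bool, AlphabeticCode σ c' ∧
      ∀ i, (c' i).length = recodedLength k D L (c i).length := by
  classical
  set e : Fin σ → ℕ := fun i =>
    if (c i).length + 2 ≤ D then ((c i).drop k).length + 2 else L + 2
  set block : List Bool → Finset (Fin σ) := fun ρ =>
    Finset.univ.filter fun j => k ≤ (c j).length ∧ (c j).take k = ρ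
  -- a block gets Kraft sum at most `1/4` from the codewords lengthened by two, and at most `1/4`
  -- from the at most `σ ≤ 2 ^ L` moved ones
  have hkraft : ∀ ρ, ∑ i ∈ block ρ, (1 / 2 : ℝ) ^ e i ≤ 1 / 2 := by
    intro ρ
    have hterm : ∀ i, (1 / 2 : ℝ) ^ e i ≤
        1 / 4 * (1 / 2) ^ ((c i).drop k).length + 1 / 4 * (1 / 2) ^ L := by
      intro i
      have h₁ : (0 : ℝ) ≤ 1 / 4 * (1 / 2) ^ ((c i).drop k).length := by positivity
      have h₂ : (0 : ℝ) ≤ 1 / 4 * (1 / 2) ^ L := by positivity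
      simp only [e]
      split_ifs <;> rw [pow_add] <;> linarith
    have hdrop := hc.sum_half_pow_length_drop_le_one k ρ (block ρ)
      fun i hi => (Finset.mem_filter.1 hi).2.2
    have hcard : ((block ρ).card : ℝ) * (1 / 2) ^ L ≤ 1 := by
      have : ((block ρ).card : ℝ) ≤ 2 ^ L := by
        exact_mod_cast (Finset.card_le_univ _).trans (by simpa using hσL)
      calc ((block ρ).card : ℝ) * (1 / 2) ^ L ≤ 2 ^ L * (1 / 2) ^ L := by gcongr
        _ = 1 := by rw [← mul_pow]; norm_num
    calc ∑ i ∈ block ρ, (1 / 2 : ℝ) ^ e i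
        ≤ ∑ i ∈ block ρ, (1 / 4 * (1 / 2) ^ ((c i).drop k).length + 1 / 4 * (1 / 2) ^ L) :=
          Finset.sum_le_sum fun i _ => hterm i
      _ = 1 / 4 * ∑ i ∈ block ρ, (1 / 2 : ℝ) ^ ((c i).drop k).length +
          1 / 4 * ((block ρ).card * (1 / 2) ^ L) := by
          rw [Finset.sum_add_distrib, ← Finset.mul_sum, Finset.sum_const, nsmul_eq_mul]
          ring
      _ ≤ 1 / 2 := by linarith
  choose W hWlen hW using fun ρ => exists_lex_ordered_words (block ρ) e (hkraft ρ)
  refine ⟨_, hc.replace_suffixes k (fun i => W ((c i).take k) i) ?_, fun i => ?_⟩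
  · intro i j hij hi hj hblock
    rw [hblock]
    exact hW _ i (by simp [block, hi, hblock]) j (by simp [block, hj]) hij
  · by_cases hk : k ≤ (c i).length
    · simp only [if_pos hk, List.length_append, hWlen, List.length_take, recodedLength,
        if_neg (not_lt.2 hk), e, List.length_drop]
      split_ifs <;> omega
    · simp only [if_neg hk, List.append_nil, List.take_of_length_le (not_le.1 hk).le,
        recodedLength, if_pos (not_le.1 hk)]

theorem exists_balancedAt_le_mul
    (hc : AlphabeticCode σ c) {k D L : ℕ} (hkD : k ≤ D) (hσL : σ ≤ 2 ^ L) {F : ℝ} (hF : 1 ≤ F)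
    (h₁ : (k : ℝ) + 2 ≤ F * k) (h₂ : (L : ℝ) + k + 2 ≤ F * (D - 1)) :
    ∃ c' : Fin σ → List Bool, AlphabeticCode σ c' ∧ BalancedAt D c' ∧
      (∀ i, (c' i).length ≤ max D (L + k + 2)) ∧
      ∀ i, ((c' i).length : ℝ) ≤ F * (c i).length := by
  obtain ⟨c', hc', hlen⟩ := hc.exists_recoded k D hσL
  refine ⟨c', hc', balancedAt_of_length_gt (m := L + k + 2) hc'.1 fun i hi => ?_,
    fun i => ?_, fun i => ?_⟩
  · rw [hlen i] at hi ⊢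
    exact recodedLength_eq_of_lt hkD hi
  · rw [hlen i]
    exact recodedLength_le_max hkD _
  · rw [hlen i]
    exact recodedLength_le_mul hF h₁ h₂ _

end AlphabeticCode

theorem alphabeticCode_binWord {σ L : ℕ} (hσ : σ ≤ 2 ^ L) :
    AlphabeticCode σ (fun i => binWord L i) :=
  AlphabeticCode.of_pairwise fun i j hij =>
    have hlt := binWord_lt_binWord (j.2.trans_le hσ) hij
    ⟨List.prefixIncomp_of_length_eq (by simp) (ne_of_lexLT hlt), hlt⟩

noncomputable def balanceDepth (t : ℝ) : ℕ := ⌈t - √t⌉₊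

noncomputable def approxFactor (t : ℝ) : ℝ :=
  (1 + 1 / (⌈√t⌉₊ : ℝ)) * ((t + √t + 3) / (balanceDepth t : ℝ))

section Estimates

variable {t : ℝ}

theorem sq_sqrt_and_one_lt_sqrt (ht : 1 < t) : √t ^ 2 = t ∧ 1 < √t := by
  refine ⟨Real.sq_sqrt (by linarith), ?_⟩
  rw [Real.lt_sqrt zero_le_one]
  linarith

theorem sub_sqrt_le_balanceDepth (t : ℝ) : t - √t ≤ balanceDepth t := Nat.le_ceil _

theorem balanceDepth_lt (ht : 1 < t) : (balanceDepth t : ℝ) < t - √t + 1 := by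
  obtain ⟨hu, -⟩ := sq_sqrt_and_one_lt_sqrt ht
  exact Nat.ceil_lt_add_one (by nlinarith)

theorem balanceDepth_pos (ht : 1 < t) : (0 : ℝ) < balanceDepth t := by
  obtain ⟨hu, -⟩ := sq_sqrt_and_one_lt_sqrt ht
  have := sub_sqrt_le_balanceDepth t
  nlinarith

theorem one_le_approxFactor (ht : 1 < t) : 1 ≤ approxFactor t := by
  obtain ⟨-, hu1⟩ := sq_sqrt_and_one_lt_sqrt ht
  have hD := balanceDepth_lt ht
  have hD0 := balanceDepth_pos ht
  have hs : (0 : ℝ) ≤ 1 / (⌈√t⌉₊ : ℝ) := by positivity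
  calc (1 : ℝ) = 1 * 1 := by ring
    _ ≤ _ := by
      unfold approxFactor
      gcongr
      · linarith
      · rw [one_le_div hD0]
        linarith

theorem ceil_le_approxFactor (ht : 2 ≤ t) (ht4 : t ≤ 4) : (⌈t⌉₊ : ℝ) ≤ approxFactor t := by
  obtain ⟨hu, hu1⟩ := sq_sqrt_and_one_lt_sqrt (by linarith : 1 < t)
  have hL : (⌈t⌉₊ : ℝ) ≤ 4 := by exact_mod_cast Nat.ceil_le.2 (by exact_mod_cast ht4)
  have hs : (⌈√t⌉₊ : ℝ) ≤ 2 := by exact_mod_cast Nat.ceil_le.2 (by push_cast; nlinarith)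
  have hs0 : (0 : ℝ) < ⌈√t⌉₊ := by exact_mod_cast Nat.ceil_pos.2 (by linarith)
  have hD : (balanceDepth t : ℝ) ≤ 2 := by
    exact_mod_cast Nat.ceil_le.2 (by push_cast; nlinarith)
  have hD0 := balanceDepth_pos (by linarith : 1 < t)
  calc (⌈t⌉₊ : ℝ) ≤ (1 + 1 / 2) * ((2 + 1 + 3) / 2) := by linarith
    _ ≤ approxFactor t := by
      unfold approxFactor
      gcongr

theorem ceil_sqrt_eq_three (h4 : 4 < t) (h8 : t < 8) : (⌈√t⌉₊ : ℝ) = 3 := by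
  obtain ⟨hu, hu1⟩ := sq_sqrt_and_one_lt_sqrt (by linarith : 1 < t)
  exact_mod_cast (Nat.ceil_eq_iff (by norm_num)).2 ⟨by norm_num; nlinarith, by norm_num; nlinarith⟩

theorem three_le_approxFactor (h4 : 4 < t) (h8 : t < 8) : 3 ≤ approxFactor t := by
  obtain ⟨hu, hu1⟩ := sq_sqrt_and_one_lt_sqrt (by linarith : 1 < t)
  have hDlo := sub_sqrt_le_balanceDepth t
  have hDhi := balanceDepth_lt (by linarith : 1 < t)
  have hD0 := balanceDepth_pos (by linarith : 1 < t)
  unfold approxFactor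
  rw [ceil_sqrt_eq_three h4 h8, ← mul_div_assoc, le_div_iff₀ hD0]
  have hD3 : 3 ≤ balanceDepth t := by
    have : (2 : ℝ) < balanceDepth t := by nlinarith
    exact_mod_cast this
  have hD6 : balanceDepth t ≤ 6 := by
    have : (balanceDepth t : ℝ) < 7 := by nlinarith
    exact_mod_cast Nat.lt_succ_iff.1 (by exact_mod_cast this)
  -- `9 D ≤ 4 (t + √t + 3)`, checked for each possible value of `D` since `D - 1 < t - √t`
  generalize balanceDepth t = D at *
  interval_cases D <;> push_cast at * <;> nlinarith

theorem add_four_le_approxFactor_mul (h4 : 4 < t) (h8 : t < 8) :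
    t + 4 ≤ approxFactor t * (balanceDepth t - 1) := by
  obtain ⟨hu, hu1⟩ := sq_sqrt_and_one_lt_sqrt (by linarith : 1 < t)
  have hDlo := sub_sqrt_le_balanceDepth t
  have hD0 := balanceDepth_pos (by linarith : 1 < t)
  have hD3 : (3 : ℝ) ≤ balanceDepth t := by
    have : (2 : ℝ) < balanceDepth t := by nlinarith
    exact_mod_cast (by exact_mod_cast this : 2 < balanceDepth t)
  unfold approxFactor
  rw [ceil_sqrt_eq_three h4 h8, mul_assoc, div_mul_eq_mul_div, ← mul_div_assoc, le_div_iff₀ hD0]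
  have hu2 : 2 < √t := by nlinarith
  have hu6 : √t < 6 := by nlinarith
  -- `4 (t + √t + 3) ≤ 3 (t + 4 √t)` because `(√t - 2) (6 - √t) ≥ 0`
  nlinarith [mul_nonneg (sub_nonneg.2 hD3) (by positivity : (0 : ℝ) ≤ t + 4 * √t),
    mul_pos (sub_pos.2 hu2) (sub_pos.2 hu6)]

theorem floor_sqrt_add_two_le_approxFactor_mul (h8 : 8 ≤ t) :
    (⌊√t⌋₊ : ℝ) + 2 ≤ approxFactor t * ⌊√t⌋₊ := by
  obtain ⟨hu, hu1⟩ := sq_sqrt_and_one_lt_sqrt (by linarith : 1 < t)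
  have hDhi := balanceDepth_lt (by linarith : 1 < t)
  have hD0 := balanceDepth_pos (by linarith : 1 < t)
  have hw := Nat.floor_le (by linarith : 0 ≤ √t)
  have hw' := Nat.lt_floor_add_one √t
  have hs := Nat.le_ceil √t
  have hs' := Nat.ceil_lt_add_one (by linarith : 0 ≤ √t)
  have hu2 : 2 < √t := by nlinarith
  unfold approxFactor
  set u := √t
  set w : ℝ := ((⌊u⌋₊ : ℕ) : ℝ)
  set s : ℝ := ((⌈u⌉₊ : ℕ) : ℝ)
  set D : ℝ := ((balanceDepth t : ℕ) : ℝ)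
  have hs0 : 0 < s := by linarith
  have hfactor : (u + 2) / (u + 1) ≤ 1 + 1 / s := by
    have : 1 ≤ (u + 1) / s := by rw [le_div_iff₀ hs0]; linarith
    rw [div_le_iff₀ (by linarith), add_mul, one_div_mul_eq_div]
    linarith
  -- from `D < u² - u + 1`, `u - 1 < w` and `(u - 1)(3u² + 5u + 5) - 2(u³ + 1) = u³ + 2u² - 7`
  have hpoly : (w + 2) * D * (u + 1) ≤ (u + 2) * (t + u + 3) * w := by
    nlinarith [mul_le_mul_of_nonneg_left hDhi.le (by positivity : (0 : ℝ) ≤ (w + 2) * (u + 1)),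
      mul_le_mul_of_nonneg_right hw'.le (by positivity : (0 : ℝ) ≤ 3 * u ^ 2 + 5 * u + 5)]
  calc w + 2 ≤ (u + 2) / (u + 1) * ((t + u + 3) / D) * w := by
        rw [div_mul_div_comm, div_mul_eq_mul_div, le_div_iff₀ (by positivity)]
        linarith
    _ ≤ (1 + 1 / s) * ((t + u + 3) / D) * w := by gcongr

theorem le_approxFactor_mul_balanceDepth_sub_one (h8 : 8 ≤ t) :
    t + √t + 3 ≤ approxFactor t * (balanceDepth t - 1) := by
  obtain ⟨hu, hu1⟩ := sq_sqrt_and_one_lt_sqrt (by linarith : 1 < t)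
  have hDlo := sub_sqrt_le_balanceDepth t
  have hD0 := balanceDepth_pos (by linarith : 1 < t)
  have hs' := Nat.ceil_lt_add_one (by linarith : 0 ≤ √t)
  have hs0 : (0 : ℝ) < ⌈√t⌉₊ := by exact_mod_cast Nat.ceil_pos.2 (by linarith)
  have hsD : (⌈√t⌉₊ : ℝ) ≤ balanceDepth t - 1 := by nlinarith
  have hfactor : (balanceDepth t : ℝ) ≤ (1 + 1 / ⌈√t⌉₊) * (balanceDepth t - 1) := by
    rw [add_mul, one_mul, one_div_mul_eq_div, ← sub_le_iff_le_add', sub_sub_cancel,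
      le_div_iff₀ hs0, one_mul]
    exact hsD
  unfold approxFactor
  calc t + √t + 3 = (t + √t + 3) / balanceDepth t * balanceDepth t := by field_simp
    _ ≤ (t + √t + 3) / balanceDepth t * ((1 + 1 / ⌈√t⌉₊) * (balanceDepth t - 1)) := by
        gcongr
    _ = _ := by ring

theorem le_balanceDepth_of_le_sqrt (ht : 4 ≤ t) {k : ℕ} (hk : (k : ℝ) ≤ √t) :
    k ≤ balanceDepth t := by
  obtain ⟨hu, -⟩ := sq_sqrt_and_one_lt_sqrt (by linarith : 1 < t)
  have := sub_sqrt_le_balanceDepth t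
  exact_mod_cast (show (k : ℝ) ≤ balanceDepth t by nlinarith)

end Estimates

namespace AlphabeticCode

variable {σ : ℕ} {c : Fin σ → List Bool}

theorem exists_balancedAt_of_le_sqrt (hc : AlphabeticCode σ c) {t : ℝ} (ht : 4 ≤ t)
    (hσt : σ ≤ 2 ^ ⌈t⌉₊) {k : ℕ} (hk : (k : ℝ) ≤ √t) (h₁ : (k : ℝ) + 2 ≤ approxFactor t * k)
    (h₂ : (⌈t⌉₊ : ℝ) + k + 2 ≤ approxFactor t * (balanceDepth t - 1)) :
    ∃ c' : Fin σ → List Bool, AlphabeticCode σ c' ∧ BalancedAt (balanceDepth t) c' ∧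
      (∀ i, ((c' i).length : ℝ) ≤ t + √t + 3) ∧
      ∀ i, ((c' i).length : ℝ) ≤ approxFactor t * (c i).length := by
  obtain ⟨c', hc', hbal, hlen, hle⟩ := hc.exists_balancedAt_le_mul
    (le_balanceDepth_of_le_sqrt ht hk) hσt (one_le_approxFactor (by linarith)) h₁ h₂
  refine ⟨c', hc', hbal, fun i => ?_, hle⟩
  have hD := balanceDepth_lt (by linarith : 1 < t)
  have hL := Nat.ceil_lt_add_one (by linarith : 0 ≤ t)
  have := Real.sqrt_nonneg t
  have hlen' : ((c' i).length : ℝ) ≤ max (balanceDepth t : ℝ) (⌈t⌉₊ + k + 2) := by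
    exact_mod_cast hlen i
  exact hlen'.trans (max_le (by linarith) (by linarith))

theorem exists_balancedAt_le_approxFactor_mul (hc : AlphabeticCode σ c) (hσ : 2 ≤ σ) {t : ℝ}
    (ht : 2 ≤ t) (hσt : σ ≤ 2 ^ ⌈t⌉₊) :
    ∃ c' : Fin σ → List Bool, AlphabeticCode σ c' ∧ BalancedAt (balanceDepth t) c' ∧
      (∀ i, ((c' i).length : ℝ) ≤ t + √t + 3) ∧
      ∀ i, ((c' i).length : ℝ) ≤ approxFactor t * (c i).length := by
  have hu1 : 1 < √t := (sq_sqrt_and_one_lt_sqrt (by linarith)).2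
  rcases le_or_gt t 4 with h4 | h4
  · refine ⟨fun i => binWord ⌈t⌉₊ i, alphabeticCode_binWord hσt, fun i j _ _ _ => by simp,
      fun i => ?_, fun i => ?_⟩
    · have := Nat.ceil_lt_add_one (by linarith : 0 ≤ t)
      simp only [length_binWord]
      linarith
    · have hF := one_le_approxFactor (by linarith : 1 < t)
      have hd : (1 : ℝ) ≤ (c i).length := by exact_mod_cast hc.one_le_length hσ i
      simp only [length_binWord]
      nlinarith [ceil_le_approxFactor ht h4]
  rcases lt_or_ge t 8 with h8 | h8
  · exact hc.exists_balancedAt_of_le_sqrt h4.le hσt (k := 1) (by simpa using hu1.le)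
      (by push_cast; linarith [three_le_approxFactor h4 h8])
      (by push_cast
          linarith [Nat.ceil_lt_add_one (by linarith : 0 ≤ t), add_four_le_approxFactor_mul h4 h8])
  · exact hc.exists_balancedAt_of_le_sqrt h4.le hσt (Nat.floor_le (by linarith))
      (floor_sqrt_add_two_le_approxFactor_mul h8)
      (by linarith [Nat.ceil_lt_add_one (by linarith : 0 ≤ t), Nat.floor_le (by linarith : 0 ≤ √t),
        le_approxFactor_mul_balanceDepth_sub_one h8])

end AlphabeticCode

theorem le_two_pow_ceil_logb {n : ℕ} (hn : 0 < n) : n ≤ 2 ^ ⌈Real.logb 2 n⌉₊ := by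
  have : (n : ℝ) ≤ 2 ^ (⌈Real.logb 2 n⌉₊ : ℝ) := by
    calc (n : ℝ) = 2 ^ Real.logb 2 n := (Real.rpow_logb two_pos (by norm_num) (by positivity)).symm
      _ ≤ 2 ^ (⌈Real.logb 2 n⌉₊ : ℝ) := Real.rpow_le_rpow_of_exponent_le one_le_two (Nat.le_ceil _)
  exact_mod_cast this

theorem exists_min_weighted_length {ι : Type*} [Fintype ι] (p : ι → ℝ)
    (S : Set (ι → List Bool)) {B : ℝ} (hB : ∀ c ∈ S, ∀ i, ((c i).length : ℝ) ≤ B)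
    (hS : S.Nonempty) :
    ∃ c ∈ S, ∀ c' ∈ S, ∑ i, p i * (c i).length ≤ ∑ i, p i * (c' i).length :=
  S.exists_min_image _ ((Set.Finite.pi' fun _ => List.finite_length_le Bool ⌊B⌋₊).subset
    fun c hc i => Nat.le_floor (hB c hc i)) hS

theorem nearly_optimal_balanced_alphabetic_code_general
    (σ : ℕ) (hσ : 4 ≤ σ) (p : Fin σ → ℝ)
    (hp : ∀ i, 0 ≤ p i) :
    ∃ c : Fin σ → List Bool, AlphabeticCode σ c ∧
      (∀ i, ((c i).length : ℝ) ≤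
        Real.logb 2 σ + Real.sqrt (Real.logb 2 σ) + 3) ∧
      (∀ cstar : Fin σ → List Bool, AlphabeticCode σ cstar →
        ∑ i, p i * ((c i).length : ℝ) ≤
          (1 + 1 / (⌈Real.sqrt (Real.logb 2 σ)⌉₊ : ℝ)) *
          ((Real.logb 2 σ + Real.sqrt (Real.logb 2 σ) + 3) /
            (⌈Real.logb 2 σ - Real.sqrt (Real.logb 2 σ)⌉₊ : ℝ)) *
          ∑ i, p i * ((cstar i).length : ℝ)) ∧
      (∀ i j : Fin σ,
        ⌈Real.logb 2 σ - Real.sqrt (Real.logb 2 σ)⌉₊ ≤ (c i).length →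
        ⌈Real.logb 2 σ - Real.sqrt (Real.logb 2 σ)⌉₊ ≤ (c j).length →
        (c i).take ⌈Real.logb 2 σ - Real.sqrt (Real.logb 2 σ)⌉₊ =
          (c j).take ⌈Real.logb 2 σ - Real.sqrt (Real.logb 2 σ)⌉₊ →
        (c i).length ≤ (c j).length + 1) := by
  set t := Real.logb 2 σ
  have ht : 2 ≤ t := (Real.le_logb_iff_rpow_le one_lt_two (by positivity)).2 <| by
    norm_num
    exact_mod_cast hσ
  have hσt : σ ≤ 2 ^ ⌈t⌉₊ := le_two_pow_ceil_logb (by omega)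
  have hrecode := fun (c : Fin σ → List Bool) (hc : AlphabeticCode σ c) =>
    hc.exists_balancedAt_le_approxFactor_mul (by omega) ht hσt
  obtain ⟨c₀, hc₀, hbal₀, hheight₀, -⟩ := hrecode _ (alphabeticCode_binWord hσt)
  obtain ⟨c, ⟨hc, hbal, hheight⟩, hmin⟩ := exists_min_weighted_length p
    {c | AlphabeticCode σ c ∧ BalancedAt (balanceDepth t) c ∧ ∀ i, ((c i).length : ℝ) ≤ t + √t + 3}
    (fun c hc => hc.2.2) ⟨c₀, hc₀, hbal₀, hheight₀⟩
  refine ⟨c, hc, hheight, fun cstar hcstar => ?_, hbal⟩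
  obtain ⟨c', hc', hbal', hheight', hle⟩ := hrecode cstar hcstar
  calc ∑ i, p i * ((c i).length : ℝ) ≤ ∑ i, p i * ((c' i).length : ℝ) :=
        hmin c' ⟨hc', hbal', hheight'⟩
    _ ≤ ∑ i, p i * (approxFactor t * (cstar i).length) :=
        Finset.sum_le_sum fun i _ => mul_le_mul_of_nonneg_left (hle i) (hp i)
    _ = approxFactor t * ∑ i, p i * ((cstar i).length : ℝ) := by
        rw [Finset.mul_sum]
        simp only [mul_left_comm]

/-- Theorem 1 (combinatorial content): a nearly optimal alphabetic prefix-free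
code of height at most `log₂ σ + √(log₂ σ) + 3`, whose expected codeword
length is within a factor
`(1 + 1/⌈√(log₂ σ)⌉) · (log₂ σ + √(log₂ σ) + 3)/⌈log₂ σ − √(log₂ σ)⌉`
of optimal, and whose subtrees rooted at depth `⌈log₂ σ − √(log₂ σ)⌉` are
completely balanced (codewords sharing such a prefix have lengths differing by
at most 1). -/
theorem nearly_optimal_balanced_alphabetic_code
    (σ : ℕ) (hσ : 4 ≤ σ) (p : Fin σ → ℝ)
    (hp : ∀ i, 0 ≤ p i) (hsum : ∑ i, p i = 1) :
    ∃ c : Fin σ → List Bool, AlphabeticCode σ c ∧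
      (∀ i, ((c i).length : ℝ) ≤
        Real.logb 2 σ + Real.sqrt (Real.logb 2 σ) + 3) ∧
      (∀ cstar : Fin σ → List Bool, AlphabeticCode σ cstar →
        ∑ i, p i * ((c i).length : ℝ) ≤
          (1 + 1 / (⌈Real.sqrt (Real.logb 2 σ)⌉₊ : ℝ)) *
          ((Real.logb 2 σ + Real.sqrt (Real.logb 2 σ) + 3) /
            (⌈Real.logb 2 σ - Real.sqrt (Real.logb 2 σ)⌉₊ : ℝ)) *
          ∑ i, p i * ((cstar i).length : ℝ)) ∧
      (∀ i j : Fin σ,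
        ⌈Real.logb 2 σ - Real.sqrt (Real.logb 2 σ)⌉₊ ≤ (c i).length →
        ⌈Real.logb 2 σ - Real.sqrt (Real.logb 2 σ)⌉₊ ≤ (c j).length →
        (c i).take ⌈Real.logb 2 σ - Real.sqrt (Real.logb 2 σ)⌉₊ =
          (c j).take ⌈Real.logb 2 σ - Real.sqrt (Real.logb 2 σ)⌉₊ →
        (c i).length ≤ (c j).length + 1) :=
  nearly_optimal_balanced_alphabetic_code_general σ hσ p hp
end

section
/- Let C be a finite nonempty complete prefix-free set of bit strings, let d ≥ 1, and let v be a length-d prefix of some element of C. Let r_v be the number of length-d prefixes x of elements of C such that reverse(x) is lexicographically less than or equal to reverse(v), and let nodes(d) be the number of distinct length-d prefixes of elements of C. Then v ends in 0 if and only if r_v ≤ nodes(d)/2. -/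
/-- Lexicographic (non-strict) order on bit strings. -/
def lexLE (x y : List Bool) : Prop := lexLT x y ∨ x = y

/-- A finite set of bit strings is complete prefix-free if no element is a
proper prefix of another and, for every proper prefix `u` of an element, both
`u ++ [0]` and `u ++ [1]` are prefixes of elements. -/
def CompletePrefixFree (C : Finset (List Bool)) : Prop :=
  (∀ u ∈ C, ∀ v ∈ C, u <+: v → u = v) ∧
  ∀ u : List Bool, (∃ w ∈ C, u <+: w ∧ u ≠ w) →
    (∃ w ∈ C, u ++ [false] <+: w) ∧ (∃ w ∈ C, u ++ [true] <+: w)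

/-- `nodes C d`: number of distinct length-`d` prefixes of elements of `C`
(nodes at depth `d` of the code tree). -/
noncomputable def nodes (C : Finset (List Bool)) (d : ℕ) : ℕ :=
  {x : List Bool | x.length = d ∧ ∃ w ∈ C, x <+: w}.ncard

/-- `rankRev C v`: rank of the node `v` among the nodes at its depth, ordered
by the lexicographic order of their reversed path labels. -/
noncomputable def rankRev (C : Finset (List Bool)) (v : List Bool) : ℕ :=
  {x : List Bool | x.length = v.length ∧ (∃ w ∈ C, x <+: w) ∧
    lexLE x.reverse v.reverse}.ncard

/-!
Nodes at a positive depth come in sibling pairs `u ++ [0]`, `u ++ [1]`, so exactly half of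
them are left children. Reversing a label puts its last bit first, so in the reversed
lexicographic order every left child precedes every right child: the left children occupy
exactly the first half of the ranks.
-/

lemma lexLE_reverse_concat_false_true (u w : List Bool) :
    lexLE (u ++ [false]).reverse (w ++ [true]).reverse := by
  simp only [List.reverse_concat]
  exact Or.inl (List.Lex.rel (by decide))

lemma not_lexLE_reverse_concat_true_false (u w : List Bool) :
    ¬ lexLE (u ++ [true]).reverse (w ++ [false]).reverse := by
  simp only [List.reverse_concat]
  rintro (⟨⟩ | h)
  · contradiction
  · simp at h

section SiblingClosed

variable {S : Set (List Bool)}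

lemma eq_image_concat_false_union_image_concat_true (hnil : [] ∉ S)
    (hsib : ∀ u b c, u ++ [b] ∈ S → u ++ [c] ∈ S) :
    S = (· ++ [false]) '' ((· ++ [false]) ⁻¹' S) ∪ (· ++ [true]) '' ((· ++ [false]) ⁻¹' S) := by
  ext x
  constructor
  · intro hx
    obtain rfl | ⟨u, b, rfl⟩ := List.eq_nil_or_concat' x
    · exact absurd hx hnil
    · have hu : u ++ [false] ∈ S := hsib u b false hx
      cases b
      · exact Or.inl ⟨u, hu, rfl⟩
      · exact Or.inr ⟨u, hu, rfl⟩
  · rintro (⟨u, hu, rfl⟩ | ⟨u, hu, rfl⟩)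
    · exact hu
    · exact hsib u false true hu

lemma ncard_eq_two_mul_ncard_preimage_concat_false (hfin : S.Finite) (hnil : [] ∉ S)
    (hsib : ∀ u b c, u ++ [b] ∈ S → u ++ [c] ∈ S) :
    S.ncard = 2 * ((· ++ [false]) ⁻¹' S).ncard := by
  have hP : ((· ++ [false]) ⁻¹' S).Finite :=
    hfin.preimage (List.append_left_injective [false]).injOn
  have hdisj : Disjoint ((· ++ [false]) '' ((· ++ [false]) ⁻¹' S))
      ((· ++ [true]) '' ((· ++ [false]) ⁻¹' S)) := by
    rw [Set.disjoint_left]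
    rintro _ ⟨u, -, rfl⟩ ⟨w, -, h⟩
    simp at h
  conv_lhs => rw [eq_image_concat_false_union_image_concat_true hnil hsib]
  rw [Set.ncard_union_eq hdisj (hP.image _) (hP.image _),
    Set.ncard_image_of_injective _ (List.append_left_injective _),
    Set.ncard_image_of_injective _ (List.append_left_injective _), two_mul]

theorem getLast?_eq_some_false_iff_two_mul_ncard_le (hfin : S.Finite) (hnil : [] ∉ S)
    (hsib : ∀ u b c, u ++ [b] ∈ S → u ++ [c] ∈ S) {v : List Bool} (hv : v ∈ S) :
    v.getLast? = some false ↔ 2 * {x ∈ S | lexLE x.reverse v.reverse}.ncard ≤ S.ncard := by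
  set L := (· ++ [false]) '' ((· ++ [false]) ⁻¹' S)
  have hL : L.Finite := hfin.subset (Set.image_preimage_subset _ _)
  have hcard : S.ncard = 2 * L.ncard := by
    rw [ncard_eq_two_mul_ncard_preimage_concat_false hfin hnil hsib,
      Set.ncard_image_of_injective _ (List.append_left_injective _)]
  rw [hcard, Nat.mul_le_mul_left_iff two_pos]
  obtain rfl | ⟨u, b, rfl⟩ := List.eq_nil_or_concat' v
  · exact absurd hv hnil
  cases b
  · have hsub : {x ∈ S | lexLE x.reverse (u ++ [false]).reverse} ⊆ L := by
      rintro x ⟨hx, hle⟩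
      obtain rfl | ⟨w, b, rfl⟩ := List.eq_nil_or_concat' x
      · exact absurd hx hnil
      cases b
      · exact ⟨w, hx, rfl⟩
      · exact absurd hle (not_lexLE_reverse_concat_true_false w u)
    simpa using Set.ncard_le_ncard hsub hL
  · have hsub : insert (u ++ [true]) L ⊆ {x ∈ S | lexLE x.reverse (u ++ [true]).reverse} := by
      rintro _ (rfl | ⟨w, hw, rfl⟩)
      · exact ⟨hv, Or.inr rfl⟩
      · exact ⟨hw, lexLE_reverse_concat_false_true w u⟩
    have hnotin : u ++ [true] ∉ L := by
      rintro ⟨w, -, h⟩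
      simp at h
    have hlt := Set.ncard_le_ncard hsub (hfin.subset fun _ hx ↦ hx.1)
    rw [Set.ncard_insert_of_notMem hnotin hL] at hlt
    simp only [List.getLast?_concat, Option.some.injEq, Bool.true_eq_false, false_iff, not_le]
    exact hlt

end SiblingClosed

def nodesAt (C : Finset (List Bool)) (d : ℕ) : Set (List Bool) :=
  {x | x.length = d ∧ ∃ w ∈ C, x <+: w}

lemma nodesAt_finite (C : Finset (List Bool)) (d : ℕ) : (nodesAt C d).Finite := by
  refine (C.biUnion fun w ↦ w.inits.toFinset).finite_toSet.subset ?_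
  rintro x ⟨-, w, hw, hx⟩
  simpa using ⟨w, hw, hx⟩

lemma CompletePrefixFree.concat_mem_nodesAt {C : Finset (List Bool)} (hC : CompletePrefixFree C)
    {d : ℕ} (u : List Bool) (b c : Bool) (h : u ++ [b] ∈ nodesAt C d) :
    u ++ [c] ∈ nodesAt C d := by
  obtain ⟨hlen, w, hw, hpre⟩ := h
  have hne : u ≠ w := by
    rintro rfl
    simpa using hpre.length_le
  obtain ⟨h0, h1⟩ := hC.2 u ⟨w, hw, (List.prefix_append u [b]).trans hpre, hne⟩
  refine ⟨by simpa using hlen, ?_⟩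
  cases c
  · exact h0
  · exact h1

lemma rankRev_eq_ncard (C : Finset (List Bool)) (v : List Bool) :
    rankRev C v = {x ∈ nodesAt C v.length | lexLE x.reverse v.reverse}.ncard := by
  simp only [rankRev, nodesAt, Set.sep_ofPred, and_assoc]

theorem left_child_iff_rank_at_most_half_general
    (C : Finset (List Bool)) (hC : CompletePrefixFree C)
    (d : ℕ) (hd : 1 ≤ d)
    (v : List Bool) (hv : v.length = d) (hvpre : ∃ w ∈ C, v <+: w) :
    v.getLast? = some false ↔
      (rankRev C v : ℚ) ≤ (nodes C d : ℚ) / 2 := by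
  subst hv
  have hnil : [] ∉ nodesAt C v.length := fun h ↦ by simp [← h.1] at hd
  rw [getLast?_eq_some_false_iff_two_mul_ncard_le (nodesAt_finite C _) hnil
    hC.concat_mem_nodesAt ⟨rfl, hvpre⟩, rankRev_eq_ncard, le_div_iff₀ two_pos, mul_comm]
  exact_mod_cast Iff.rfl

/-- A node at depth `d ≥ 1` is a left child (its path label ends in 0) if and
only if its reverse-lexicographic rank is at most `nodes(d)/2`. -/
theorem left_child_iff_rank_at_most_half
    (C : Finset (List Bool)) (hne : C.Nonempty) (hC : CompletePrefixFree C)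
    (d : ℕ) (hd : 1 ≤ d)
    (v : List Bool) (hv : v.length = d) (hvpre : ∃ w ∈ C, v <+: w) :
    v.getLast? = some false ↔
      (rankRev C v : ℚ) ≤ (nodes C d : ℚ) / 2 :=
  left_child_iff_rank_at_most_half_general C hC d hd v hv hvpre
end

section
/- Let C be a finite complete prefix-free set of bit strings with the wavelet-matrix property. Then for every d, every w ∈ C with |w| = d, and every bit string u of length d that is a proper prefix of some element of C, reverse(w) is lexicographically strictly less than reverse(u). -/
/-- The wavelet-matrix property: codeword lengths are non-decreasing when the
codewords are arranged so that their reverses are in lexicographic order. -/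
def WaveletMatrixProp (C : Finset (List Bool)) : Prop :=
  ∀ w₁ ∈ C, ∀ w₂ ∈ C, lexLE w₁.reverse w₂.reverse → w₁.length ≤ w₂.length

namespace List

theorem Lex.bot_cons {α : Type*} [LinearOrder α] [OrderBot α] {a b : List α}
    (h : Lex (· < ·) a b) (hlen : b.length ≤ a.length) : Lex (· < ·) (⊥ :: a) b := by
  induction h with
  | nil => simp at hlen
  | @cons x l₁ l₂ _ ih =>
    rcases (bot_le : ⊥ ≤ x).lt_or_eq with hx | hx
    · exact Lex.rel hx
    · rw [← hx]
      exact Lex.cons (ih (by simpa using hlen))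
  | rel hab => exact Lex.rel (bot_le.trans_lt hab)

theorem Lex.replicate_bot_append {α : Type*} [LinearOrder α] [OrderBot α] {a b : List α}
    (h : Lex (· < ·) a b) (hlen : b.length ≤ a.length) (k : ℕ) :
    Lex (· < ·) (replicate k ⊥ ++ a) b := by
  induction k with
  | zero => simpa using h
  | succ k ih => exact ih.bot_cons (by simp; omega)

end List

namespace CompletePrefixFree

variable {C : Finset (List Bool)}

theorem exists_append_bit_isPrefix (hC : CompletePrefixFree C) {u : List Bool}
    (hu : ∃ x ∈ C, u <+: x ∧ u ≠ x) (b : Bool) : ∃ x ∈ C, u ++ [b] <+: x := by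
  cases b
  exacts [(hC.2 u hu).1, (hC.2 u hu).2]

theorem exists_append_replicate_mem (hC : CompletePrefixFree C) {u : List Bool}
    (hu : ∃ x ∈ C, u <+: x ∧ u ≠ x) (b : Bool) :
    ∃ k, 0 < k ∧ u ++ List.replicate k b ∈ C := by
  classical
  let P : ℕ → Prop := fun k ↦ ∃ x ∈ C, u ++ List.replicate k b <+: x
  let N := C.sup List.length
  have hP_le : ∀ k, P k → k ≤ N := fun k ⟨x, hx, hpre⟩ ↦ by
    have := hpre.length_le.trans (Finset.le_sup (f := List.length) hx)
    simp only [List.length_append, List.length_replicate] at this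
    omega
  have hP_one : P 1 := hC.exists_append_bit_isPrefix hu b
  set k := Nat.findGreatest P N
  have hk_pos : 0 < k := Nat.le_findGreatest (hP_le 1 hP_one) hP_one
  obtain ⟨x, hx, hpre⟩ : P k := Nat.findGreatest_spec (hP_le 1 hP_one) hP_one
  refine ⟨k, hk_pos, ?_⟩
  by_contra hnot
  -- Otherwise `u ++ bᵏ` is a proper prefix of `x`; completeness extends it by one more `b`,
  -- against the maximality of `k`.
  have hmore : P (k + 1) := by
    show ∃ x ∈ C, u ++ List.replicate (k + 1) b <+: x
    rw [List.replicate_succ', ← List.append_assoc]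
    exact hC.exists_append_bit_isPrefix ⟨x, hx, hpre, fun h ↦ hnot (h ▸ hx)⟩ b
  exact Nat.findGreatest_is_greatest (Nat.lt_succ_self k) (hP_le _ hmore) hmore

theorem ne_of_mem_of_isPrefix_ne (hC : CompletePrefixFree C) {w : List Bool} (hw : w ∈ C)
    {u : List Bool} (hu : ∃ x ∈ C, u <+: x ∧ u ≠ x) : w ≠ u := by
  rintro rfl
  obtain ⟨x, hx, hpre, hne⟩ := hu
  exact hne (hC.1 w hw x hx hpre)

end CompletePrefixFree

/-- At any depth, the reversed path labels of all leaves are lexicographically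
less than the reversed path labels of all internal nodes at that depth. -/
theorem leaves_before_internal_nodes
    (C : Finset (List Bool)) (hC : CompletePrefixFree C)
    (hW : WaveletMatrixProp C)
    (d : ℕ) (w : List Bool) (hw : w ∈ C) (hwl : w.length = d)
    (u : List Bool) (hu : u.length = d)
    (hupre : ∃ x ∈ C, u <+: x ∧ u ≠ x) :
    lexLT w.reverse u.reverse := by
  have hne : w.reverse ≠ u.reverse :=
    fun h ↦ hC.ne_of_mem_of_isPrefix_ne hw hupre (List.reverse_injective h)
  refine hne.lt_or_gt.resolve_right fun hlt ↦ ?_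
  obtain ⟨k, hk, hx⟩ := hC.exists_append_replicate_mem hupre false
  have hrev : lexLT (u ++ List.replicate k false).reverse w.reverse := by
    rw [List.reverse_append, List.reverse_replicate]
    exact List.Lex.replicate_bot_append hlt (by simp [hu, hwl]) k
  have hlen := hW _ hx w hw (Or.inl hrev)
  simp only [List.length_append, List.length_replicate] at hlen
  omega
end

section
/- Let C be a finite complete prefix-free set of bit strings with the wavelet-matrix property. For each d let nodes(d) be the number of distinct length-d prefixes of elements of C and leaves(d) the number of elements of C of length d; for a length-d prefix v of an element of C let r_v be the number of length-d prefixes x of elements of C with reverse(x) lexicographically ≤ reverse(v). Then for every bit string u of length d that is a proper prefix of some element of C: r_{u++[0]} = r_u − leaves(d), and r_{u++[1]} = r_u − leaves(d) + nodes(d+1)/2. -/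
/-- `leaves C d`: number of codewords of length `d`. -/
def leaves (C : Finset (List Bool)) (d : ℕ) : ℕ :=
  (C.filter fun w => w.length = d).card

/-!
Every node of depth `d + 1` is a child `y ++ [b]` of an internal node `y` of depth `d`, and
comparing reversed labels compares the last bit first. Hence the rank of `u ++ [false]` is the
rank of `u` among the internal nodes of depth `d`, and the rank of `u ++ [true]` exceeds it by the
number of internal nodes, which is `nodes (d + 1) / 2`.

It remains to see that every codeword `w` of depth `d` precedes every internal node `y` of
depth `d`. Following `0`-edges from `y` reaches a codeword `y ++ 0ᵏ` with `k ≥ 1`; it is longer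
than `w`, so by the wavelet-matrix property `reverse w < 0ᵏ ++ reverse y`, and since
`reverse w` and `reverse y` have the same length this forces `reverse w ≤ reverse y`.
-/

theorem lexLT_iff_lt {x y : List Bool} : lexLT x y ↔ x < y := Iff.rfl

theorem lexLE_cons_cons_iff {a b : Bool} {x y : List Bool} :
    lexLE (a :: x) (b :: y) ↔ a < b ∨ a = b ∧ lexLE x y := by
  simp only [lexLE, lexLT_iff_lt, List.cons_lt_cons_iff, List.cons.injEq]
  tauto

theorem lexLT_of_not_lexLE {x y : List Bool} (h : ¬ lexLE y x) : lexLT x y := by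
  simp only [lexLE, lexLT_iff_lt, not_or] at h ⊢
  rcases lt_trichotomy x y with hxy | rfl | hyx
  exacts [hxy, absurd rfl h.2, absurd hyx h.1]

theorem lexLE_of_lexLT_false_cons : ∀ {a b : List Bool}, lexLT a (false :: b) → lexLE a b
  | [], [], _ => Or.inr rfl
  | [], _ :: _, _ => Or.inl List.Lex.nil
  | false :: _, true :: _, _ => lexLE_cons_cons_iff.2 (Or.inl rfl)
  | false :: _, false :: _, h => lexLE_cons_cons_iff.2
      (Or.inr ⟨rfl, lexLE_of_lexLT_false_cons (List.lex_cons_iff.1 h)⟩)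
  | false :: _, [], h => absurd (List.lex_cons_iff.1 h) List.not_lex_nil
  | true :: _, _, h => by cases h with | rel h => exact absurd h (by decide)

theorem lexLE_of_lexLT_replicate_false_append {a b : List Bool} (hab : a.length = b.length) :
    ∀ {k : ℕ}, lexLT a (List.replicate k false ++ b) → lexLE a b
  | 0, h => Or.inl h
  | k + 1, h => by
    rcases lexLE_of_lexLT_false_cons h with h | rfl
    · exact lexLE_of_lexLT_replicate_false_append hab h
    · obtain rfl : k = 0 := by simpa using hab
      exact Or.inr rfl

def internalNodes (C : Finset (List Bool)) (d : ℕ) : Set (List Bool) :=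
  {y | y.length = d ∧ ∃ w ∈ C, y <+: w ∧ y ≠ w}

noncomputable def internalRank (C : Finset (List Bool)) (v : List Bool) : ℕ :=
  {y ∈ internalNodes C v.length | lexLE y.reverse v.reverse}.ncard

theorem finite_internalNodes (C : Finset (List Bool)) (d : ℕ) : (internalNodes C d).Finite :=
  (C.biUnion fun w => w.inits.toFinset).finite_toSet.subset fun y ⟨_, w, hw, hyw, _⟩ => by
    simpa [List.mem_inits] using ⟨w, hw, hyw⟩

namespace CompletePrefixFree

variable {C : Finset (List Bool)}

theorem notMem_of_prefix_ne (hC : CompletePrefixFree C) {y : List Bool}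
    (hy : ∃ w ∈ C, y <+: w ∧ y ≠ w) : y ∉ C := by
  obtain ⟨w, hw, hyw, hne⟩ := hy
  exact fun hyC => hne (hC.1 y hyC w hw hyw)

theorem exists_append_replicate_false_mem (hC : CompletePrefixFree C) {y : List Bool}
    (hy : ∃ w ∈ C, y <+: w) : ∃ k, y ++ List.replicate k false ∈ C := by
  by_cases hyC : y ∈ C
  · exact ⟨0, by simpa using hyC⟩
  obtain ⟨w, hw, hyw⟩ := hy
  obtain ⟨⟨v, hv, hyv⟩, -⟩ := hC.2 y ⟨w, hw, hyw, by rintro rfl; exact hyC hw⟩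
  have hlt : y.length < C.sup List.length := by
    have := hyv.length_le.trans (Finset.le_sup (f := List.length) hv)
    simp only [List.length_append, List.length_singleton] at this
    omega
  obtain ⟨k, hk⟩ := hC.exists_append_replicate_false_mem ⟨v, hv, hyv⟩
  exact ⟨k + 1, by simpa [List.replicate_succ] using hk⟩
termination_by C.sup List.length - y.length

theorem lexLE_reverse_of_mem (hC : CompletePrefixFree C) (hW : WaveletMatrixProp C)
    {w y : List Bool} (hw : w ∈ C) (hy : ∃ x ∈ C, y <+: x ∧ y ≠ x)
    (hlen : w.length = y.length) : lexLE w.reverse y.reverse := by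
  obtain ⟨k, hk⟩ := hC.exists_append_replicate_false_mem
    (hy.imp fun x ⟨hx, hyx, _⟩ => ⟨hx, hyx⟩)
  have hk0 : k ≠ 0 := by
    rintro rfl
    exact hC.notMem_of_prefix_ne hy (by simpa using hk)
  have hlt : lexLT w.reverse (List.replicate k false ++ y.reverse) := by
    refine lexLT_of_not_lexLE fun hle => ?_
    have := hW _ hk w hw (by simpa using hle)
    simp only [List.length_append, List.length_replicate] at this
    omega
  exact lexLE_of_lexLT_replicate_false_append (by simpa using hlen) hlt

theorem exists_prefix_append_singleton_iff (hC : CompletePrefixFree C) {y : List Bool} {b : Bool} :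
    (∃ w ∈ C, y ++ [b] <+: w) ↔ ∃ w ∈ C, y <+: w ∧ y ≠ w := by
  constructor
  · rintro ⟨w, hw, hyw⟩
    refine ⟨w, hw, (List.prefix_append y [b]).trans hyw, ?_⟩
    rintro rfl
    simpa using hyw.length_le
  · intro hy
    cases b
    exacts [(hC.2 y hy).1, (hC.2 y hy).2]

theorem ncard_setOf_children (hC : CompletePrefixFree C) (d : ℕ) (q : List Bool → Prop) :
    {x | x.length = d + 1 ∧ (∃ w ∈ C, x <+: w) ∧ q x}.ncard =
      {y ∈ internalNodes C d | q (y ++ [false])}.ncard +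
        {y ∈ internalNodes C d | q (y ++ [true])}.ncard := by
  have hsplit : {x | x.length = d + 1 ∧ (∃ w ∈ C, x <+: w) ∧ q x} =
      (· ++ [false]) '' {y ∈ internalNodes C d | q (y ++ [false])} ∪
        (· ++ [true]) '' {y ∈ internalNodes C d | q (y ++ [true])} := by
    ext x
    rcases x.eq_nil_or_concat' with rfl | ⟨y, b, rfl⟩
    · simp
    · cases b <;> simp [internalNodes, hC.exists_prefix_append_singleton_iff, and_assoc]
  have hdisj : Disjoint ((· ++ [false]) '' {y ∈ internalNodes C d | q (y ++ [false])})
      ((· ++ [true]) '' {y ∈ internalNodes C d | q (y ++ [true])}) := by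
    refine Set.disjoint_left.2 ?_
    rintro _ ⟨y, -, rfl⟩ ⟨y', -, h⟩
    simpa using congrArg List.getLast? h
  have hfin (b : Bool) : ((· ++ [b]) '' {y ∈ internalNodes C d | q (y ++ [b])}).Finite :=
    ((finite_internalNodes C d).subset (Set.sep_subset _ _)).image _
  rw [hsplit, Set.ncard_union_eq hdisj (hfin false) (hfin true),
    Set.ncard_image_of_injective _ (List.append_left_injective _),
    Set.ncard_image_of_injective _ (List.append_left_injective _)]

theorem nodes_succ (hC : CompletePrefixFree C) (d : ℕ) :
    nodes C (d + 1) = 2 * (internalNodes C d).ncard := by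
  have := hC.ncard_setOf_children d fun _ => True
  simp only [and_true, Set.ofPred_mem_eq] at this
  rw [nodes, this, two_mul]

theorem rankRev_append_false (hC : CompletePrefixFree C) (u : List Bool) :
    rankRev C (u ++ [false]) = internalRank C u := by
  rw [rankRev, List.length_append, List.length_singleton, hC.ncard_setOf_children]
  simp +decide [internalRank, lexLE_cons_cons_iff]

theorem rankRev_append_true (hC : CompletePrefixFree C) (u : List Bool) :
    rankRev C (u ++ [true]) = (internalNodes C u.length).ncard + internalRank C u := by
  rw [rankRev, List.length_append, List.length_singleton, hC.ncard_setOf_children]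
  simp +decide [internalRank, lexLE_cons_cons_iff]

theorem rankRev_eq_leaves_add_internalRank (hC : CompletePrefixFree C) (hW : WaveletMatrixProp C)
    {u : List Bool} (hu : ∃ x ∈ C, u <+: x ∧ u ≠ x) :
    rankRev C u = leaves C u.length + internalRank C u := by
  have hsplit : {x | x.length = u.length ∧ (∃ w ∈ C, x <+: w) ∧ lexLE x.reverse u.reverse} =
      ↑(C.filter fun w => w.length = u.length) ∪
        {y ∈ internalNodes C u.length | lexLE y.reverse u.reverse} := by
    ext x
    simp only [internalNodes, Set.mem_ofPred_eq, Finset.coe_filter, Set.mem_union]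
    constructor
    · rintro ⟨hx, ⟨w, hw, hxw⟩, hle⟩
      by_cases hxC : x ∈ C
      · exact Or.inl ⟨hxC, hx⟩
      · exact Or.inr ⟨⟨hx, w, hw, hxw, by rintro rfl; exact hxC hw⟩, hle⟩
    · rintro (⟨hxC, hx⟩ | ⟨⟨hx, w, hw, hxw, -⟩, hle⟩)
      · exact ⟨hx, ⟨x, hxC, List.prefix_refl x⟩, hC.lexLE_reverse_of_mem hW hxC hu hx⟩
      · exact ⟨hx, ⟨w, hw, hxw⟩, hle⟩
  have hdisj : Disjoint (↑(C.filter fun w => w.length = u.length) : Set (List Bool))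
      {y ∈ internalNodes C u.length | lexLE y.reverse u.reverse} :=
    Set.disjoint_left.2 fun y hyC hy => hC.notMem_of_prefix_ne hy.1.2 (Finset.mem_filter.1 hyC).1
  rw [rankRev, hsplit, Set.ncard_union_eq hdisj (Finset.finite_toSet _)
    ((finite_internalNodes C _).subset (Set.sep_subset _ _)), Set.ncard_coe_finset, leaves,
    internalRank]

end CompletePrefixFree

/-- Rank relations between an internal node `u` at depth `d` and its two
children: `r_{u0} = r_u − leaves(d)` and
`r_{u1} = r_u − leaves(d) + nodes(d+1)/2`. -/
theorem rank_of_children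
    (C : Finset (List Bool)) (hC : CompletePrefixFree C)
    (hW : WaveletMatrixProp C)
    (d : ℕ) (u : List Bool) (hu : u.length = d)
    (hupre : ∃ x ∈ C, u <+: x ∧ u ≠ x) :
    (rankRev C (u ++ [false]) : ℚ)
      = (rankRev C u : ℚ) - (leaves C d : ℚ) ∧
    (rankRev C (u ++ [true]) : ℚ)
      = (rankRev C u : ℚ) - (leaves C d : ℚ) + (nodes C (d + 1) : ℚ) / 2 := by
  subst hu
  rw [hC.rankRev_append_false, hC.rankRev_append_true, hC.nodes_succ,
    hC.rankRev_eq_leaves_add_internalRank hW hupre]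
  constructor <;> push_cast <;> ring
end
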